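/- arXiv:2204.06834 — 10 statements merged into one kernel-verified Lean document; each statement's English description precedes it below -/
import Mathlib

section
/- For real numbers z and w and an exponent p with 2 < p < ∞, we have |z+w|^p + |z-w|^p - 2|z|^p - 2|w|^p ≥ 0, and equality holds if and only if z·w = 0. -/
open Set

private lemma superadd {x y q : ℝ} (hx : 0 < x) (hy : 0 < y) (hq : 1 < q) :
    x ^ q + y ^ q < (x + y) ^ q := by
  have hsplit : ∀ t : ℝ, 0 < t → t ^ q = t * t ^ (q - 1) := by
    intro t ht
    have : t ^ q = t ^ (1 + (q - 1)) := by ring_nf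
    rw [this, Real.rpow_add ht, Real.rpow_one]
  have hxy : 0 < x + y := by linarith
  have h1 : x ^ (q - 1) < (x + y) ^ (q - 1) :=
    Real.rpow_lt_rpow hx.le (by linarith) (by linarith)
  have h2 : y ^ (q - 1) < (x + y) ^ (q - 1) :=
    Real.rpow_lt_rpow hy.le (by linarith) (by linarith)
  calc x ^ q + y ^ q = x * x ^ (q - 1) + y * y ^ (q - 1) := by
        rw [hsplit x hx, hsplit y hy]
    _ < x * (x + y) ^ (q - 1) + y * (x + y) ^ (q - 1) :=
        add_lt_add (mul_lt_mul_of_pos_left h1 hx) (mul_lt_mul_of_pos_left h2 hy)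
    _ = (x + y) * (x + y) ^ (q - 1) := by ring
    _ = (x + y) ^ q := (hsplit (x + y) hxy).symm

private lemma key {p a b : ℝ} (hp : 2 < p) (ha : 0 < a) (hb : 0 < b) :
    2 * a ^ p + 2 * b ^ p < (a + b) ^ p + |a - b| ^ p := by
  set q := p / 2 with hqdef
  have hq : 1 < q := by rw [hqdef]; linarith
  have hsq : ∀ x : ℝ, 0 ≤ x → x ^ p = (x ^ 2) ^ q := by
    intro x hx
    rw [← Real.rpow_natCast x 2, ← Real.rpow_mul hx]
    norm_num
    congr 1
    rw [hqdef]; ring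
  have hab : a ^ p + b ^ p < (a ^ 2 + b ^ 2) ^ q := by
    rw [hsq a ha.le, hsq b hb.le]
    exact superadd (pow_pos ha 2) (pow_pos hb 2) hq
  have hconv : 2 * (a ^ 2 + b ^ 2) ^ q ≤ (a + b) ^ p + |a - b| ^ p := by
    rw [hsq (a + b) (by linarith), hsq |a - b| (abs_nonneg _), sq_abs]
    have hc := (convexOn_rpow hq.le).2 (mem_Ici.2 (sq_nonneg (a - b)))
      (mem_Ici.2 (sq_nonneg (a + b))) (by norm_num : (0:ℝ) ≤ 1/2)
      (by norm_num : (0:ℝ) ≤ 1/2) (by norm_num)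
    simp only [smul_eq_mul] at hc
    have heq : (1/2 : ℝ) * (a - b) ^ 2 + (1/2 : ℝ) * (a + b) ^ 2 = a ^ 2 + b ^ 2 := by ring
    rw [heq] at hc
    linarith
  linarith

/-- Clarkson-type inequality for `p > 2` on the real line, with equality iff `z * w = 0`. -/
theorem stmt0 (z w p : ℝ) (hp : 2 < p) :
    0 ≤ |z + w| ^ p + |z - w| ^ p - 2 * |z| ^ p - 2 * |w| ^ p ∧
    (|z + w| ^ p + |z - w| ^ p - 2 * |z| ^ p - 2 * |w| ^ p = 0 ↔ z * w = 0) := by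
  have hp0 : p ≠ 0 := by positivity
  rcases eq_or_ne (z * w) 0 with h0 | h0
  · have hE : |z + w| ^ p + |z - w| ^ p - 2 * |z| ^ p - 2 * |w| ^ p = 0 := by
      rcases mul_eq_zero.1 h0 with hz | hw
      · subst hz
        simp [Real.zero_rpow hp0]
        ring
      · subst hw
        simp [Real.zero_rpow hp0]
        ring
    exact ⟨le_of_eq hE.symm, ⟨fun _ => h0, fun _ => hE⟩⟩
  · have hz : z ≠ 0 := fun h => h0 (by simp [h])
    have hw : w ≠ 0 := fun h => h0 (by simp [h])
    have habs : |z + w| ^ p + |z - w| ^ p = (|z| + |w|) ^ p + |(|z| - |w|)| ^ p := by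
      rcases le_total 0 z with hz' | hz' <;> rcases le_total 0 w with hw' | hw'
      · rw [abs_of_nonneg hz', abs_of_nonneg hw', abs_of_nonneg (by linarith : 0 ≤ z + w)]
      · have h1 : |z| - |w| = z + w := by rw [abs_of_nonneg hz', abs_of_nonpos hw']; ring
        have h2 : |z| + |w| = z - w := by rw [abs_of_nonneg hz', abs_of_nonpos hw']; ring
        rw [h1, h2, abs_of_nonneg (by linarith : 0 ≤ z - w)]
        ring
      · have h1 : |z| - |w| = -(z + w) := by rw [abs_of_nonpos hz', abs_of_nonneg hw']; ring
        have h2 : |z| + |w| = -(z - w) := by rw [abs_of_nonpos hz', abs_of_nonneg hw']; ring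
        rw [h1, h2, abs_neg, abs_of_nonpos (by linarith : z - w ≤ 0)]
        ring
      · have h1 : |z| + |w| = -(z + w) := by rw [abs_of_nonpos hz', abs_of_nonpos hw']; ring
        have h2 : |z| - |w| = -(z - w) := by rw [abs_of_nonpos hz', abs_of_nonpos hw']; ring
        rw [h1, h2, abs_neg, abs_of_nonpos (by linarith : z + w ≤ 0)]
    have hstrict : 2 * |z| ^ p + 2 * |w| ^ p < |z + w| ^ p + |z - w| ^ p := by
      rw [habs]
      exact key hp (abs_pos.2 hz) (abs_pos.2 hw)
    exact ⟨by linarith, ⟨fun h => absurd h (by linarith), fun h => absurd h h0⟩⟩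
end

section
/- For real numbers z and w and an exponent p with 1 ≤ p < 2, we have |z+w|^p + |z-w|^p - 2|z|^p - 2|w|^p ≤ 0, and equality holds if and only if z·w = 0. -/
open Real

private lemma conv_aux (x y q : ℝ) (hx : 0 ≤ x) (hy : 0 ≤ y) (hq : 1 ≤ q) :
    (x + y) ^ q ≤ 2 ^ (q - 1) * (x ^ q + y ^ q) := by
  lift x to NNReal using hx
  lift y to NNReal using hy
  have h := NNReal.rpow_add_le_mul_rpow_add_rpow x y hq
  exact_mod_cast h

private lemma sq_rpow_half (z p : ℝ) : (z * z) ^ (p / 2) = |z| ^ p := by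
  have h : z * z = |z| ^ (2 : ℝ) := by
    rw [show (2 : ℝ) = ((2 : ℕ) : ℝ) by norm_num, Real.rpow_natCast, sq, abs_mul_abs_self]
  rw [h, ← Real.rpow_mul (abs_nonneg z)]
  congr 1
  ring

private lemma strict_subadd {x y s : ℝ} (hx : 0 < x) (hy : 0 < y) (hs0 : 0 < s) (hs1 : s < 1) :
    (x + y) ^ s < x ^ s + y ^ s := by
  have hxy : 0 < x + y := by linarith
  have hsub : s - 1 < 0 := by linarith
  have h1 : (x + y) ^ s = x * (x + y) ^ (s - 1) + y * (x + y) ^ (s - 1) := by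
    rw [← add_mul, mul_comm, ← Real.rpow_add_one (ne_of_gt hxy)]
    congr 1
    ring
  have h2 : (x + y) ^ (s - 1) < x ^ (s - 1) :=
    Real.rpow_lt_rpow_of_neg hx (by linarith) hsub
  have h3 : (x + y) ^ (s - 1) < y ^ (s - 1) :=
    Real.rpow_lt_rpow_of_neg hy (by linarith) hsub
  have h4 : x * x ^ (s - 1) = x ^ s := by
    rw [mul_comm, ← Real.rpow_add_one (ne_of_gt hx)]
    congr 1
    ring
  have h5 : y * y ^ (s - 1) = y ^ s := by
    rw [mul_comm, ← Real.rpow_add_one (ne_of_gt hy)]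
    congr 1
    ring
  calc (x + y) ^ s = x * (x + y) ^ (s - 1) + y * (x + y) ^ (s - 1) := h1
    _ < x * x ^ (s - 1) + y * y ^ (s - 1) := by
        gcongr
    _ = x ^ s + y ^ s := by rw [h4, h5]

private lemma strict_case (z w p : ℝ) (hp1 : 1 ≤ p) (hp2 : p < 2)
    (hz : z ≠ 0) (hw : w ≠ 0) :
    |z + w| ^ p + |z - w| ^ p < 2 * |z| ^ p + 2 * |w| ^ p := by
  have hp0 : 0 < p := by linarith
  set a := |z + w| with ha
  set b := |z - w| with hb
  have haN : 0 ≤ a := abs_nonneg _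
  have hbN : 0 ≤ b := abs_nonneg _
  have hapN : 0 ≤ a ^ p := Real.rpow_nonneg haN p
  have hbpN : 0 ≤ b ^ p := Real.rpow_nonneg hbN p
  have hq : 1 ≤ 2 / p := (one_le_div hp0).2 (le_of_lt hp2)
  -- convexity step
  have h1 : (a ^ p + b ^ p) ^ (2 / p) ≤ 2 ^ (2 / p - 1) * ((a ^ p) ^ (2 / p) + (b ^ p) ^ (2 / p)) :=
    conv_aux _ _ _ hapN hbpN hq
  have hap2 : (a ^ p) ^ (2 / p) = a * a := by
    rw [← Real.rpow_mul haN, show p * (2 / p) = ((2:ℕ):ℝ) by push_cast; field_simp,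
      Real.rpow_natCast, pow_two]
  have hbp2 : (b ^ p) ^ (2 / p) = b * b := by
    rw [← Real.rpow_mul hbN]
    rw [show p * (2 / p) = ((2:ℕ):ℝ) by push_cast; field_simp]
    rw [Real.rpow_natCast, sq]
  have hab2 : a * a + b * b = 2 * (z * z + w * w) := by
    rw [ha, hb, abs_mul_abs_self, abs_mul_abs_self]; ring
  have h2 : (a ^ p + b ^ p) ^ (2 / p) ≤ 2 ^ (2 / p) * (z * z + w * w) := by
    calc (a ^ p + b ^ p) ^ (2 / p) ≤ 2 ^ (2 / p - 1) * (a * a + b * b) := by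
          rw [hap2, hbp2] at h1; exact h1
      _ = 2 ^ (2 / p) * (z * z + w * w) := by
          rw [hab2, Real.rpow_sub (by norm_num : (0:ℝ) < 2), Real.rpow_one]
          ring
  -- apply rpow (p/2)
  have hzz : 0 < z * z := mul_self_pos.2 hz
  have hww : 0 < w * w := mul_self_pos.2 hw
  have hzw : 0 < z * z + w * w := by linarith
  have h3 : a ^ p + b ^ p ≤ 2 * (z * z + w * w) ^ (p / 2) := by
    have hm := Real.rpow_le_rpow (Real.rpow_nonneg (add_nonneg hapN hbpN) _) h2
      (le_of_lt (by positivity : (0:ℝ) < p / 2))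
    rw [← Real.rpow_mul (add_nonneg hapN hbpN), show 2 / p * (p / 2) = 1 by field_simp,
      Real.rpow_one, Real.mul_rpow (by positivity) (le_of_lt hzw),
      ← Real.rpow_mul (by norm_num : (0:ℝ) ≤ 2), show 2 / p * (p / 2) = 1 by field_simp,
      Real.rpow_one] at hm
    exact hm
  -- strict subadditivity step
  have h4 : (z * z + w * w) ^ (p / 2) < (z * z) ^ (p / 2) + (w * w) ^ (p / 2) :=
    strict_subadd hzz hww (by positivity) (by linarith)
  rw [sq_rpow_half, sq_rpow_half] at h4
  calc a ^ p + b ^ p ≤ 2 * (z * z + w * w) ^ (p / 2) := h3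
    _ < 2 * (|z| ^ p + |w| ^ p) := by linarith
    _ = 2 * |z| ^ p + 2 * |w| ^ p := by ring

private lemma eq_case (z w p : ℝ) (hp1 : 1 ≤ p) (hzw : z * w = 0) :
    |z + w| ^ p + |z - w| ^ p - 2 * |z| ^ p - 2 * |w| ^ p = 0 := by
  have hp0 : p ≠ 0 := by linarith
  rcases mul_eq_zero.1 hzw with h | h
  · subst h
    simp [Real.zero_rpow hp0, abs_neg]
    ring
  · subst h
    simp [Real.zero_rpow hp0]
    ring

/-- Clarkson-type inequality for `1 ≤ p < 2` on the real line, with equality iff `z * w = 0`. -/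
theorem stmt1 (z w p : ℝ) (hp1 : 1 ≤ p) (hp2 : p < 2) :
    |z + w| ^ p + |z - w| ^ p - 2 * |z| ^ p - 2 * |w| ^ p ≤ 0 ∧
    (|z + w| ^ p + |z - w| ^ p - 2 * |z| ^ p - 2 * |w| ^ p = 0 ↔ z * w = 0) := by
  by_cases hzw : z * w = 0
  · have h := eq_case z w p hp1 hzw
    exact ⟨le_of_eq h, by simp [h, hzw]⟩
  · have hz : z ≠ 0 := fun h => hzw (by simp [h])
    have hw : w ≠ 0 := fun h => hzw (by simp [h])
    have h := strict_case z w p hp1 hp2 hz hw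
    constructor
    · linarith
    · constructor
      · intro h0; linarith
      · intro h0; exact absurd h0 hzw
end

section
/- Let X be an infinite-dimensional real normed space, let x* be a continuous linear functional on X with ‖x*‖ ≤ 1 − ε for some 0 < ε < 1. Then for every weak*-open set V containing x*, the diameter of V ∩ B_{X*} (in the dual norm) is at least 2ε. Consequently (1 − ε)·B_{X*} ⊆ (B_{X*})'_{2ε}. -/
open NormedSpace Metric Pointwise

/-- The Szlenk derivative of a set `F` in the dual of `X`: the points of `F` all of whose
weak*-open neighbourhoods meet `F` in a set of norm-diameter at least `ε`. -/
def szlenkDeriv (X : Type*) [NormedAddCommGroup X] [NormedSpace ℝ X]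
    (F : Set (StrongDual ℝ X)) (ε : ℝ) : Set (StrongDual ℝ X) :=
  {f ∈ F | ∀ V : Set (WeakDual ℝ X), IsOpen V → StrongDual.toWeakDual f ∈ V →
    ε ≤ diam ((StrongDual.toWeakDual ⁻¹' V : Set (StrongDual ℝ X)) ∩ F)}

/-!
A weak*-neighbourhood of `x'` only constrains the values of functionals at finitely many
points. In an infinite-dimensional space some norm-one `g` vanishes at all of them, so
`x' ± ε g` both lie in the neighbourhood, and in the ball when `x'` is `ε` inside it; they are
`2ε` apart.
-/

open Filter Topology

theorem WeakDual.exists_finite_forall_eqOn_mem_of_mem_nhds {𝕜 E : Type*} [CommSemiring 𝕜]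
    [TopologicalSpace 𝕜] [ContinuousAdd 𝕜] [ContinuousConstSMul 𝕜 𝕜] [AddCommMonoid E] [Module 𝕜 E]
    [TopologicalSpace E] {x : WeakDual 𝕜 E} {V : Set (WeakDual 𝕜 E)} (hV : V ∈ 𝓝 x) :
    ∃ s : Set E, s.Finite ∧ ∀ y : WeakDual 𝕜 E, Set.EqOn y x s → y ∈ V := by
  erw [nhds_induced, nhds_pi] at hV
  obtain ⟨U, hU, hUV⟩ := mem_comap.1 hV
  obtain ⟨s, hs, t, ht, htU⟩ := mem_pi.1 hU
  refine ⟨s, hs, fun y hy => hUV (htU fun i hi => ?_)⟩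
  show y i ∈ t i
  rw [hy hi]
  exact mem_of_mem_nhds (ht i)

theorem exists_norm_eq_one_eqOn_zero {𝕜 E : Type*} [RCLike 𝕜] [NormedAddCommGroup E]
    [NormedSpace 𝕜 E] (hE : ¬ FiniteDimensional 𝕜 E) {s : Set E} (hs : s.Finite) :
    ∃ g : StrongDual 𝕜 E, ‖g‖ = 1 ∧ Set.EqOn g 0 s := by
  set p := Submodule.span 𝕜 s
  have hp : FiniteDimensional 𝕜 p := FiniteDimensional.span_of_finite 𝕜 hs
  have : IsClosed (p : Set E) := p.closed_of_finiteDimensional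
  obtain ⟨x, hx⟩ : ∃ x, x ∉ p := by
    by_contra! h
    rw [Submodule.eq_top_iff'.2 h] at hp
    exact hE (Submodule.topEquiv.finiteDimensional)
  have hx0 : p.mkQ x ≠ 0 := by simpa using hx
  obtain ⟨f, hf⟩ := SeparatingDual.exists_ne_zero (R := 𝕜) hx0
  set φ := f.comp p.mkQL
  have hφ : φ ≠ 0 := fun hφ => hf (congrArg (· x) hφ)
  refine ⟨(‖φ‖⁻¹ : 𝕜) • φ, norm_smul_inv_norm hφ, fun y hy => ?_⟩
  simp [φ, (Submodule.Quotient.mk_eq_zero p).2 (Submodule.subset_span hy)]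

section

variable {X : Type*} [NormedAddCommGroup X] [NormedSpace ℝ X]

theorem two_mul_le_diam_preimage_inter_closedBall (hX : ¬ FiniteDimensional ℝ X) {ε r : ℝ}
    (hε : 0 ≤ ε) {c x' : StrongDual ℝ X} (hx' : dist x' c ≤ r - ε)
    {V : Set (WeakDual ℝ X)} (hV : IsOpen V) (hx'V : StrongDual.toWeakDual x' ∈ V) :
    2 * ε ≤ diam ((StrongDual.toWeakDual ⁻¹' V : Set (StrongDual ℝ X)) ∩ closedBall c r) := by
  obtain ⟨s, hs, hsV⟩ := WeakDual.exists_finite_forall_eqOn_mem_of_mem_nhds (hV.mem_nhds hx'V)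
  obtain ⟨g, hg, hgs⟩ := exists_norm_eq_one_eqOn_zero hX hs
  have hεg : ‖ε • g‖ = ε := by rw [norm_smul, hg, Real.norm_of_nonneg hε, mul_one]
  have mem : ∀ t : ℝ, |t| ≤ ε → x' + t • g ∈ StrongDual.toWeakDual ⁻¹' V ∩ closedBall c r := by
    intro t ht
    refine ⟨hsV _ fun i hi => ?_, mem_closedBall.2 ?_⟩
    · change x' i + t * g i = x' i
      rw [show g i = 0 from hgs hi, mul_zero, add_zero]
    calc dist (x' + t • g) c ≤ ‖t • g‖ + dist x' c := by
          simpa only [dist_self_add_left] using dist_triangle (x' + t • g) x' c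
      _ ≤ ε + (r - ε) := by
        gcongr
        rwa [norm_smul, hg, mul_one, Real.norm_eq_abs]
      _ = r := add_sub_cancel ε r
  calc 2 * ε = dist (x' + ε • g) (x' + (-ε) • g) := by
        rw [dist_eq_norm, neg_smul, add_sub_add_left_eq_sub, sub_neg_eq_add, ← two_smul ℝ,
          norm_smul, hεg, Real.norm_two]
    _ ≤ _ := dist_le_diam_of_mem (isBounded_closedBall.subset Set.inter_subset_right)
        (mem ε (abs_of_nonneg hε).le) (mem (-ε) (by rw [abs_neg, abs_of_nonneg hε]))

theorem closedBall_sub_subset_szlenkDeriv (hX : ¬ FiniteDimensional ℝ X) {ε : ℝ} (hε : 0 ≤ ε)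
    (c : StrongDual ℝ X) (r : ℝ) :
    closedBall c (r - ε) ⊆ szlenkDeriv X (closedBall c r) (2 * ε) := fun _ hx' =>
  ⟨closedBall_subset_closedBall (by linarith) hx',
    fun _ hV hx'V => two_mul_le_diam_preimage_inter_closedBall hX hε hx' hV hx'V⟩

end

theorem stmt4_general (X : Type*) [NormedAddCommGroup X] [NormedSpace ℝ X]
    (hX : ¬ FiniteDimensional ℝ X) (ε : ℝ) (hε0 : 0 < ε)
    (x' : StrongDual ℝ X) (hx' : ‖x'‖ ≤ 1 - ε) :
    (∀ V : Set (WeakDual ℝ X), IsOpen V → StrongDual.toWeakDual x' ∈ V →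
      2 * ε ≤ diam ((StrongDual.toWeakDual ⁻¹' V : Set (StrongDual ℝ X)) ∩ closedBall 0 1)) ∧
    (1 - ε) • closedBall (0 : StrongDual ℝ X) 1 ⊆
      szlenkDeriv X (closedBall 0 1) (2 * ε) := by
  have hε1 : 0 ≤ 1 - ε := (norm_nonneg x').trans hx'
  refine ⟨fun V hV hx'V => two_mul_le_diam_preimage_inter_closedBall hX hε0.le
    (by rwa [dist_zero_right]) hV hx'V, ?_⟩
  rw [_root_.smul_closedBall _ _ zero_le_one, smul_zero, Real.norm_of_nonneg hε1, mul_one]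
  exact closedBall_sub_subset_szlenkDeriv hX hε0.le 0 1

/-- In an infinite-dimensional normed space, a functional of norm at most `1 - ε` has all
its weak*-neighbourhoods meeting the dual ball in diameter at least `2ε`; consequently
`(1-ε) B_{X*} ⊆ (B_{X*})'_{2ε}`. -/
theorem stmt4 (X : Type*) [NormedAddCommGroup X] [NormedSpace ℝ X]
    (hX : ¬ FiniteDimensional ℝ X) (ε : ℝ) (hε0 : 0 < ε) (hε1 : ε < 1)
    (x' : StrongDual ℝ X) (hx' : ‖x'‖ ≤ 1 - ε) :
    (∀ V : Set (WeakDual ℝ X), IsOpen V → StrongDual.toWeakDual x' ∈ V →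
      2 * ε ≤ diam ((StrongDual.toWeakDual ⁻¹' V : Set (StrongDual ℝ X)) ∩ closedBall 0 1)) ∧
    (1 - ε) • closedBall (0 : StrongDual ℝ X) 1 ⊆
      szlenkDeriv X (closedBall 0 1) (2 * ε) :=
  stmt4_general X hX ε hε0 x' hx'
end

section
/- For 0 < ε < 1, the Szlenk derivative of the unit ball of the dual of c₀ satisfies (B_{c₀*})'_{2ε} = (1 − ε)·B_{c₀*}. -/
/-!
Adding `± ε` times the `n`-th coordinate functional to `f` gives two points at distance `2ε` which
converge weak* to `f`, so every `f` with `‖f‖ ≤ 1 - ε` survives the derivation. Conversely, if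
`‖f‖ > 1 - ε` then `f x > 1 - ε` for some `x` in the unit ball supported in `[0, N)`. Since `x ± w`
stays in the unit ball of `c₀` for unit vectors `w` supported in `[N, ∞)`, every `g` in the dual
ball satisfies `|g w| ≤ 1 - g x` there; so on the weak* neighbourhood of `f` where `g x` and the
first `N` coordinates of `g` are close to those of `f`, the dual ball has diameter less than `2ε`.
-/

open Metric Filter Topology Pointwise

abbrev c0 : Type := ZeroAtInftyContinuousMap ℕ ℝ

namespace c0

lemma abs_apply_le_norm (x : c0) (i : ℕ) : |x i| ≤ ‖x‖ :=
  x.toBCF.norm_coe_le_norm i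

lemma norm_le_of_forall_abs_le {x : c0} {C : ℝ} (hC : 0 ≤ C) (h : ∀ i, |x i| ≤ C) : ‖x‖ ≤ C :=
  (BoundedContinuousFunction.norm_le hC).2 h

lemma tendsto_apply_atTop (x : c0) : Tendsto x atTop (𝓝 0) := by
  simpa [cocompact_eq_cofinite, Nat.cofinite_eq_atTop] using x.zero_at_infty'

lemma tendsto_cocompact_of_forall_ge {β : Type*} [TopologicalSpace β] [Zero β] {v : ℕ → β}
    {N : ℕ} (hv : ∀ i, N ≤ i → v i = 0) :
    Tendsto v (cocompact ℕ) (𝓝 0) := by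
  rw [cocompact_eq_cofinite, Nat.cofinite_eq_atTop]
  exact tendsto_const_nhds.congr' (eventually_atTop.2 ⟨N, fun i hi => (hv i hi).symm⟩)

def trunc (x : c0) (N : ℕ) : c0 where
  toFun i := if i < N then x i else 0
  continuous_toFun := continuous_of_discreteTopology
  zero_at_infty' := tendsto_cocompact_of_forall_ge (N := N) fun _ hi => if_neg (by omega)

def single (n : ℕ) : c0 where
  toFun i := if i = n then 1 else 0
  continuous_toFun := continuous_of_discreteTopology
  zero_at_infty' := tendsto_cocompact_of_forall_ge (N := n + 1) fun _ hi => if_neg (by omega)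

@[simp] lemma trunc_apply (x : c0) (N i : ℕ) : x.trunc N i = if i < N then x i else 0 := rfl

@[simp] lemma single_apply (n i : ℕ) : single n i = if i = n then 1 else 0 := rfl

lemma norm_single_le (n : ℕ) : ‖single n‖ ≤ 1 :=
  norm_le_of_forall_abs_le zero_le_one fun i => by
    by_cases h : i = n <;> simp [h]

lemma norm_trunc_le (x : c0) (N : ℕ) : ‖x.trunc N‖ ≤ ‖x‖ :=
  norm_le_of_forall_abs_le (norm_nonneg x) fun i => by
    by_cases h : i < N <;> simp [h, abs_apply_le_norm]

lemma norm_sub_trunc_le (x : c0) (N : ℕ) : ‖x - x.trunc N‖ ≤ ‖x‖ :=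
  norm_le_of_forall_abs_le (norm_nonneg x) fun i => by
    by_cases h : i < N <;> simp [h, abs_apply_le_norm]

lemma trunc_zero (x : c0) : x.trunc 0 = 0 := by
  ext i
  simp

lemma trunc_succ (x : c0) (N : ℕ) : x.trunc (N + 1) = x.trunc N + x N • single N := by
  ext i
  rcases lt_trichotomy i N with h | rfl | h
  · simp [h, h.trans (Nat.lt_succ_self N), h.ne]
  · simp
  · simp [h.not_gt, (Nat.succ_le_of_lt h).not_gt, h.ne']

lemma tendsto_trunc (x : c0) : Tendsto x.trunc atTop (𝓝 x) := by
  refine Metric.tendsto_atTop.2 fun θ hθ => ?_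
  obtain ⟨N, hN⟩ := Metric.tendsto_atTop.1 x.tendsto_apply_atTop (θ / 2) (half_pos hθ)
  refine ⟨N, fun n hn => ?_⟩
  rw [dist_eq_norm]
  refine (norm_le_of_forall_abs_le (half_pos hθ).le fun i => ?_).trans_lt (half_lt_self hθ)
  by_cases h : i < n
  · simp [h, (half_pos hθ).le]
  · simpa [h] using (hN i (by omega)).le

lemma norm_add_le_max_of_disjoint {x w : c0} (hxw : ∀ i, x i = 0 ∨ w i = 0) :
    ‖x + w‖ ≤ max ‖x‖ ‖w‖ :=
  norm_le_of_forall_abs_le (le_max_of_le_left (norm_nonneg x)) fun i => by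
    rcases hxw i with h | h <;> simp [h, abs_apply_le_norm]

noncomputable def evalCLM (n : ℕ) : StrongDual ℝ c0 :=
  LinearMap.mkContinuous
    { toFun := fun x => x n
      map_add' := fun _ _ => rfl
      map_smul' := fun _ _ => rfl } 1
    fun x => by simpa using abs_apply_le_norm x n

@[simp] lemma evalCLM_apply (n : ℕ) (x : c0) : evalCLM n x = x n := rfl

lemma norm_evalCLM (n : ℕ) : ‖evalCLM n‖ = 1 := by
  refine le_antisymm (LinearMap.mkContinuous_norm_le _ zero_le_one _) ?_
  calc (1 : ℝ) = ‖evalCLM n (single n)‖ := by simp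
    _ ≤ ‖evalCLM n‖ := (evalCLM n).unit_le_opNorm _ (norm_single_le n)

lemma tendsto_toWeakDual_evalCLM :
    Tendsto (fun n => StrongDual.toWeakDual (evalCLM n)) atTop (𝓝 0) := by
  rw [tendsto_iff_forall_eval_tendsto_topDualPairing]
  intro y
  exact y.tendsto_apply_atTop

lemma abs_apply_trunc_le (g : StrongDual ℝ c0) (z : c0) (N : ℕ) :
    |g (z.trunc N)| ≤ (∑ i ∈ Finset.range N, |g (single i)|) * ‖z‖ := by
  induction N with
  | zero => simp [trunc_zero]
  | succ N ih =>
    rw [trunc_succ, map_add, map_smul, smul_eq_mul, Finset.sum_range_succ, add_mul]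
    have hzN : |z N| ≤ ‖z‖ := abs_apply_le_norm z N
    calc |g (z.trunc N) + z N * g (single N)|
        ≤ |g (z.trunc N)| + |z N| * |g (single N)| := by
          rw [← abs_mul]; exact abs_add_le _ _
      _ ≤ (∑ i ∈ Finset.range N, |g (single i)|) * ‖z‖ + |g (single N)| * ‖z‖ := by
          rw [mul_comm |z N|]
          gcongr

lemma apply_add_abs_apply_le_one {k : StrongDual ℝ c0} (hk : ‖k‖ ≤ 1) {x w : c0} (hx : ‖x‖ ≤ 1)
    (hw : ‖w‖ ≤ 1) (hxw : ∀ i, x i = 0 ∨ w i = 0) : k x + |k w| ≤ 1 := by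
  have key : ∀ u : c0, ‖u‖ ≤ 1 → (∀ i, x i = 0 ∨ u i = 0) → k x + k u ≤ 1 := fun u hu hxu =>
    calc k x + k u = k (x + u) := (map_add k x u).symm
      _ ≤ ‖k (x + u)‖ := le_abs_self _
      _ ≤ ‖k‖ := k.unit_le_opNorm _ ((norm_add_le_max_of_disjoint hxu).trans (max_le hx hu))
      _ ≤ 1 := hk
  rcases abs_choice (k w) with h | h <;> rw [h]
  · exact key w hw hxw
  · rw [← map_neg]
    exact key (-w) (by rwa [norm_neg]) fun i => by simpa using hxw i

lemma norm_sub_le_of_forall_ge_eq_zero {g h : StrongDual ℝ c0} (hg : ‖g‖ ≤ 1) (hh : ‖h‖ ≤ 1)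
    {x : c0} (hx : ‖x‖ ≤ 1) {N : ℕ} (hxN : ∀ i, N ≤ i → x i = 0) :
    ‖g - h‖ ≤ ∑ i ∈ Finset.range N, |(g - h) (single i)| + (1 - g x) + (1 - h x) := by
  have hgx : g x ≤ 1 := (le_abs_self _).trans ((g.unit_le_opNorm x hx).trans hg)
  have hhx : h x ≤ 1 := (le_abs_self _).trans ((h.unit_le_opNorm x hx).trans hh)
  have hsum : 0 ≤ ∑ i ∈ Finset.range N, |(g - h) (single i)| :=
    Finset.sum_nonneg fun _ _ => abs_nonneg _
  refine ContinuousLinearMap.opNorm_le_of_unit_norm (by linarith) fun z hz => ?_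
  set w := z - z.trunc N
  have hxw : ∀ i, x i = 0 ∨ w i = 0 := fun i => by
    by_cases hi : i < N
    · exact Or.inr (by simp [w, hi])
    · exact Or.inl (hxN i (by omega))
  have hw : ‖w‖ ≤ 1 := hz ▸ norm_sub_trunc_le z N
  have hgw := apply_add_abs_apply_le_one hg hx hw hxw
  have hhw := apply_add_abs_apply_le_one hh hx hw hxw
  have hhead := abs_apply_trunc_le (g - h) z N
  rw [hz, mul_one] at hhead
  have hsplit : (g - h) z = (g - h) (z.trunc N) + (g w - h w) := by
    simp only [w, map_sub, FunLike.coe_sub, Pi.sub_apply]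
    ring
  calc ‖(g - h) z‖ = |(g - h) (z.trunc N) + (g w - h w)| := by rw [hsplit]; rfl
    _ ≤ |(g - h) (z.trunc N)| + (|g w| + |h w|) :=
          (abs_add_le _ _).trans (by gcongr; exact abs_sub _ _)
    _ ≤ _ := by linarith

lemma dist_le_of_abs_apply_sub_lt {f g h : StrongDual ℝ c0} (hg : ‖g‖ ≤ 1) (hh : ‖h‖ ≤ 1)
    {x : c0} (hx : ‖x‖ ≤ 1) {N : ℕ} (hxN : ∀ i, N ≤ i → x i = 0) {η : ℝ}
    (hgf : |g x - f x| < η ∧ ∀ i ∈ Finset.range N, |g (single i) - f (single i)| < η)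
    (hhf : |h x - f x| < η ∧ ∀ i ∈ Finset.range N, |h (single i) - f (single i)| < η) :
    dist g h ≤ 2 * (N + 1) * η + 2 * (1 - f x) := by
  have hcoord : ∀ i ∈ Finset.range N, |(g - h) (single i)| ≤ 2 * η := fun i hi => by
    have := abs_sub_le (g (single i)) (f (single i)) (h (single i))
    rw [abs_sub_comm (f _)] at this
    have := add_lt_add (hgf.2 i hi) (hhf.2 i hi)
    simp only [FunLike.coe_sub, Pi.sub_apply]
    linarith
  have hsum := Finset.sum_le_card_nsmul _ _ _ hcoord
  rw [Finset.card_range, nsmul_eq_mul] at hsum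
  have := norm_sub_le_of_forall_ge_eq_zero hg hh hx hxN
  have := abs_lt.1 hgf.1
  have := abs_lt.1 hhf.1
  rw [dist_eq_norm (E := StrongDual ℝ c0)]
  linarith

lemma exists_forall_ge_eq_zero_lt_apply (f : StrongDual ℝ c0) {r : ℝ} (hr : r < ‖f‖) :
    ∃ N, ∃ x : c0, ‖x‖ ≤ 1 ∧ (∀ i, N ≤ i → x i = 0) ∧ r < f x := by
  obtain ⟨y, hy, hry⟩ := f.exists_lt_apply_of_lt_opNorm hr
  obtain ⟨x, hx, hrx⟩ : ∃ x : c0, ‖x‖ ≤ 1 ∧ r < f x := by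
    rcases lt_abs.1 hry with h | h
    · exact ⟨y, hy.le, h⟩
    · exact ⟨-y, by rw [norm_neg]; exact hy.le, by rwa [map_neg]⟩
  obtain ⟨N, hN⟩ := (((f.continuous.tendsto x).comp x.tendsto_trunc).eventually
    (lt_mem_nhds hrx)).exists
  exact ⟨N, x.trunc N, (norm_trunc_le x N).trans hx, fun i hi => by simp [Nat.not_lt.2 hi], hN⟩

end c0

open c0

section Dual

variable {X : Type*} [NormedAddCommGroup X] [NormedSpace ℝ X]

lemma closedBall_subset_szlenkDeriv {ι : Type*} {l : Filter ι} [l.NeBot]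
    {φ : ι → StrongDual ℝ X} (hφ : ∀ i, ‖φ i‖ = 1)
    (hφl : Tendsto (fun i => StrongDual.toWeakDual (φ i)) l (𝓝 0)) {ε : ℝ} (hε : 0 ≤ ε) :
    closedBall (0 : StrongDual ℝ X) (1 - ε) ⊆ szlenkDeriv X (closedBall 0 1) (2 * ε) := by
  intro f hf
  rw [mem_closedBall_zero_iff] at hf
  have hball : ∀ s i, |s| ≤ ε → f + s • φ i ∈ closedBall (0 : StrongDual ℝ X) 1 :=
    fun s i hs => mem_closedBall_zero_iff.2 <|
      calc ‖f + s • φ i‖ ≤ ‖f‖ + |s| * ‖φ i‖ := by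
            rw [← Real.norm_eq_abs, ← norm_smul]; exact norm_add_le _ _
        _ ≤ 1 := by rw [hφ]; linarith
  refine ⟨mem_closedBall_zero_iff.2 (by linarith), fun V hV hfV => ?_⟩
  have hlim : ∀ s : ℝ, ∀ᶠ i in l, StrongDual.toWeakDual (f + s • φ i) ∈ V := by
    intro s
    have : Tendsto (fun i => StrongDual.toWeakDual (f + s • φ i)) l
        (𝓝 (StrongDual.toWeakDual f)) := by
      simpa using tendsto_const_nhds.add (hφl.const_smul s)
    exact this.eventually (hV.mem_nhds hfV)
  obtain ⟨i, hi₁, hi₂⟩ := ((hlim ε).and (hlim (-ε))).exists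
  calc 2 * ε = dist (f + ε • φ i) (f + (-ε) • φ i) := by
        have : ε • φ i - (-ε) • φ i = (2 * ε) • φ i := by module
        rw [dist_eq_norm, add_sub_add_left_eq_sub, this, norm_smul, hφ,
          Real.norm_of_nonneg (by linarith), mul_one]
    _ ≤ _ := dist_le_diam_of_mem (isBounded_closedBall.subset Set.inter_subset_right)
        ⟨hi₁, hball ε i (abs_of_nonneg hε).le⟩ ⟨hi₂, hball (-ε) i (by simp [abs_of_nonneg hε])⟩

/-- Instance search does not find `NormSMulClass ℝ (StrongDual ℝ c₀)`, so `smul_closedBall` is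
specialised here over an arbitrary `X`. -/
lemma smul_closedBall_zero_one {r : ℝ} (hr : 0 ≤ r) :
    r • closedBall (0 : StrongDual ℝ X) 1 = closedBall 0 r := by
  rw [_root_.smul_closedBall _ _ zero_le_one, smul_zero, Real.norm_of_nonneg hr, mul_one]

end Dual

lemma szlenkDeriv_subset_closedBall (ε : ℝ) :
    szlenkDeriv c0 (closedBall 0 1) (2 * ε) ⊆ closedBall (0 : StrongDual ℝ c0) (1 - ε) := by
  rintro f ⟨hf, hdiam⟩
  rw [mem_closedBall_zero_iff] at hf ⊢
  by_contra! hlt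
  obtain ⟨N, x, hx, hxN, hfx⟩ := exists_forall_ge_eq_zero_lt_apply f hlt
  have hfx₁ : f x ≤ 1 := (le_abs_self _).trans ((f.unit_le_opNorm x hx).trans hf)
  set δ := f x - (1 - ε)
  set η := δ / (2 * (N + 1))
  have hη : 2 * (N + 1) * η = δ := by
    simp only [η]; field_simp
  have hclose : ∀ y : c0, ∀ᶠ g in 𝓝 (StrongDual.toWeakDual f), |g y - f y| < η := fun y =>
    (WeakDual.eval_continuous y).continuousAt.eventually
      (Metric.ball_mem_nhds _ (div_pos (by linarith) (by positivity)))
  have hnhds : ∀ᶠ g in 𝓝 (StrongDual.toWeakDual f),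
      |g x - f x| < η ∧ ∀ i ∈ Finset.range N, |g (single i) - f (single i)| < η :=
    (hclose x).and ((Filter.eventually_all_finset _).2 fun i _ => hclose (single i))
  obtain ⟨V, hVclose, hV, hfV⟩ := eventually_nhds_iff.1 hnhds
  have hsmall : diam ((StrongDual.toWeakDual ⁻¹' V : Set (StrongDual ℝ c0)) ∩ closedBall 0 1)
      ≤ 2 * ε - δ := by
    refine diam_le_of_forall_dist_le (by linarith) fun g ⟨hgV, hg⟩ h ⟨hhV, hh⟩ => ?_
    rw [mem_closedBall_zero_iff (E := StrongDual ℝ c0)] at hg hh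
    refine (dist_le_of_abs_apply_sub_lt hg hh hx hxN (hVclose _ hgV) (hVclose _ hhV)).trans_eq ?_
    rw [hη]
    ring
  linarith [hdiam V hV hfV]

/-- For `0 < ε < 1`, the Szlenk derivative of the dual unit ball of `c₀` satisfies
`(B_{c₀*})'_{2ε} = (1-ε) B_{c₀*}`. -/
theorem stmt5 (ε : ℝ) (hε0 : 0 < ε) (hε1 : ε < 1) :
    szlenkDeriv (ZeroAtInftyContinuousMap ℕ ℝ) (closedBall 0 1) (2 * ε) =
      (1 - ε) • closedBall (0 : StrongDual ℝ (ZeroAtInftyContinuousMap ℕ ℝ)) 1 := by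
  rw [smul_closedBall_zero_one (by linarith)]
  exact (szlenkDeriv_subset_closedBall ε).antisymm
    (closedBall_subset_szlenkDeriv norm_evalCLM tendsto_toWeakDual_evalCLM hε0.le)
end

section
/- Let X be a separable Banach space and (xₙ)ₙ a sequence dense in the closed unit ball B_X. Suppose (aₙ)ₙ is a sequence of real numbers in [−1,1] such that for every finite set M ⊆ ℕ, |Σ_{n∈M} aₙ| ≤ ‖Σ_{n∈M} xₙ‖. Then there exists a continuous linear functional x* on X with ‖x*‖ ≤ 1 and x*(xₙ) = aₙ for every n. -/
/-!
Extend `xₙ ↦ aₙ` linearly: once `|∑ cₙ aₙ| ≤ ‖∑ cₙ xₙ‖` holds for every finitely supported real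
`c`, Hahn–Banach yields the functional. The hypothesis makes `aₙ` odd and 1-Lipschitz along `x`
(`|aₘ ± aₙ| ≤ ‖xₘ ± xₙ‖`), and every point of the unit ball is a limit of infinitely many `xₙ`.
Hence in a signed sum `∑ ±x_{nᵢ}` with repeated indices each `±x_{nᵢ}` can be replaced by a nearby
`x_{mᵢ}` with the `mᵢ` pairwise distinct, at small cost on both sides; this settles integer
coefficients, and real ones follow by homogeneity and continuity.
-/

open Filter Topology Metric Set

theorem exists_injective_forall_mem_of_forall_infinite {ι α : Type*} [Finite ι]
    (S : ι → Set α) (hS : ∀ i, (S i).Infinite) :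
    ∃ f : ι → α, Function.Injective f ∧ ∀ i, f i ∈ S i := by
  classical
  cases nonempty_fintype ι
  choose t htS htcard using fun i => (hS i).exists_subset_card_eq (Fintype.card ι)
  obtain ⟨f, hf, hft⟩ := (Finset.all_card_le_biUnion_card_iff_exists_injective t).mp
    fun s => by
      obtain rfl | ⟨i, hi⟩ := s.eq_empty_or_nonempty
      · simp
      · calc s.card ≤ Fintype.card ι := Finset.card_le_univ s
          _ = (t i).card := (htcard i).symm
          _ ≤ (s.biUnion t).card := Finset.card_le_card (Finset.subset_biUnion_of_mem t hi)
  exact ⟨f, hf, fun i => htS i (hft i)⟩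

theorem tendsto_intFloor_mul_div_atTop (r : ℝ) :
    Tendsto (fun d : ℕ => (⌊d * r⌋ : ℝ) / d) atTop (𝓝 r) := by
  have hlow : Tendsto (fun d : ℕ => r - 1 / (d : ℝ)) atTop (𝓝 r) := by
    simpa using tendsto_const_nhds.sub (tendsto_one_div_atTop_nhds_zero_nat (𝕜 := ℝ))
  refine tendsto_of_tendsto_of_tendsto_of_le_of_le' hlow tendsto_const_nhds ?_ ?_ <;>
    filter_upwards [eventually_gt_atTop 0] with d hd <;>
    have hd' : (0 : ℝ) < d := Nat.cast_pos.mpr hd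
  · rw [le_div_iff₀ hd', sub_mul, one_div_mul_cancel hd'.ne', mul_comm]
    linarith [Int.lt_floor_add_one ((d : ℝ) * r)]
  · rw [div_le_iff₀ hd', mul_comm]
    exact Int.floor_le _

theorem exists_dual_comp_eq_of_abs_le {V X : Type*} [AddCommGroup V] [Module ℝ V]
    [NormedAddCommGroup X] [NormedSpace ℝ X] (T : V →ₗ[ℝ] X) (S : V →ₗ[ℝ] ℝ)
    (h : ∀ v, |S v| ≤ ‖T v‖) :
    ∃ f : StrongDual ℝ X, ‖f‖ ≤ 1 ∧ ∀ v, f (T v) = S v := by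
  have hST : ∀ u v, T u = T v → S u = S v := fun u v huv => by
    simpa [sub_eq_zero, huv] using h (u - v)
  obtain ⟨R, hR⟩ := T.rangeRestrict.exists_rightInverse_of_surjective T.range_rangeRestrict
  have hTR : ∀ y, T (R y) = y := fun y => congrArg Subtype.val (LinearMap.congr_fun hR y)
  let φ : StrongDual ℝ (LinearMap.range T) := (S ∘ₗ R).mkContinuous 1 fun y => by
    simpa [hTR] using h (R y)
  obtain ⟨g, hgφ, hg⟩ := exists_extension_norm_eq (LinearMap.range T) φ
  refine ⟨g, hg ▸ LinearMap.mkContinuous_norm_le _ zero_le_one _, fun v => ?_⟩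
  calc g (T v) = φ (T.rangeRestrict v) := hgφ (T.rangeRestrict v)
    _ = S v := hST _ _ (hTR _)

section

variable {X : Type*} [NormedAddCommGroup X] {x : ℕ → X} {a : ℕ → ℝ}

theorem infinite_setOf_dist_lt_of_closedBall_subset_closure [NormedSpace ℝ X]
    (hdense : closedBall (0 : X) 1 ⊆ closure (range x)) {y : X} (hy : y ∈ closedBall (0 : X) 1)
    {ε : ℝ} (hε : 0 < ε) : {n | dist (x n) y < ε}.Infinite := by
  rcases subsingleton_or_nontrivial X with hX | hX
  · simpa [Subsingleton.elim (x _) y, hε] using Set.infinite_univ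
  intro hfin
  set F := x '' {n | dist (x n) y < ε}
  set U := ball (0 : X) 1 ∩ ball y ε
  have hUopen : IsOpen U := isOpen_ball.inter isOpen_ball
  have hU : U.Infinite := by
    rw [← closure_ball _ one_ne_zero] at hy
    obtain ⟨z, hz, hzy⟩ := Metric.mem_closure_iff.mp hy ε hε
    exact infinite_of_mem_nhds z <| hUopen.mem_nhds ⟨hz, mem_ball_comm.mp hzy⟩
  have hV : (closure (range x) ∩ (U \ F)).Nonempty := by
    obtain ⟨z, hz⟩ := (hU.sdiff (hfin.image x)).nonempty
    exact ⟨z, hdense (ball_subset_closedBall hz.1.1), hz⟩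
  obtain ⟨_, ⟨n, rfl⟩, hn, hnF⟩ :=
    (closure_inter_open_nonempty_iff (hUopen.sdiff (hfin.image x).isClosed)).mp hV
  exact hnF ⟨n, hn.2, rfl⟩

def AbsSumLeNormSum (a : ℕ → ℝ) (x : ℕ → X) : Prop :=
  ∀ M : Finset ℕ, |∑ n ∈ M, a n| ≤ ‖∑ n ∈ M, x n‖

namespace AbsSumLeNormSum

theorem abs_le (h : AbsSumLeNormSum a x) (n : ℕ) : |a n| ≤ ‖x n‖ := by
  simpa using h {n}

variable [NormedSpace ℝ X]

theorem abs_add_le (h : AbsSumLeNormSum a x) (m n : ℕ) : |a m + a n| ≤ ‖x m + x n‖ := by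
  rcases eq_or_ne m n with rfl | hmn
  · simpa [← two_mul, ← two_smul ℝ (x m), abs_mul, norm_smul] using h.abs_le m
  · simpa [Finset.sum_pair hmn] using h {m, n}

theorem abs_sub_le (h : AbsSumLeNormSum a x) (hdense : closedBall (0 : X) 1 ⊆ closure (range x))
    (hx : ∀ n, x n ∈ closedBall (0 : X) 1) (m n : ℕ) : |a m - a n| ≤ ‖x m - x n‖ := by
  refine le_of_forall_pos_le_add fun δ hδ => ?_
  have hxn : -x n ∈ closedBall (0 : X) 1 := by simpa using hx n
  obtain ⟨_, ⟨k, rfl⟩, hk⟩ := Metric.mem_closure_iff.mp (hdense hxn) (δ / 2) (half_pos hδ)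
  rw [dist_comm, dist_eq_norm, sub_neg_eq_add] at hk
  have hmk : ‖x m + x k‖ ≤ ‖x m - x n‖ + ‖x k + x n‖ := by
    simpa [sub_add_add_cancel] using norm_add_le (x m - x n) (x k + x n)
  calc |a m - a n| = |(a m + a k) - (a k + a n)| := by ring_nf
    _ ≤ |a m + a k| + |a k + a n| := abs_sub _ _
    _ ≤ ‖x m + x k‖ + ‖x k + x n‖ := add_le_add (h.abs_add_le m k) (h.abs_add_le k n)
    _ ≤ ‖x m - x n‖ + δ := by linarith

theorem abs_sub_sign_mul_le (h : AbsSumLeNormSum a x)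
    (hdense : closedBall (0 : X) 1 ⊆ closure (range x)) (hx : ∀ n, x n ∈ closedBall (0 : X) 1)
    (m n : ℕ) (σ : SignType) : |a m - σ * a n| ≤ ‖x m - (σ : ℝ) • x n‖ := by
  cases σ
  · simpa using h.abs_le m
  · simpa using h.abs_add_le m n
  · simpa using h.abs_sub_le hdense hx m n

theorem abs_sum_sign_mul_le (h : AbsSumLeNormSum a x)
    (hdense : closedBall (0 : X) 1 ⊆ closure (range x)) (hx : ∀ n, x n ∈ closedBall (0 : X) 1)
    {ι : Type*} [Fintype ι] (n : ι → ℕ) (σ : ι → SignType) :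
    |∑ i, σ i * a (n i)| ≤ ‖∑ i, (σ i : ℝ) • x (n i)‖ := by
  refine le_of_forall_pos_le_add fun ε hε => ?_
  set δ := ε / (2 * (Fintype.card ι + 1))
  have hδ : 0 < δ := by positivity
  have hσx : ∀ i, (σ i : ℝ) • x (n i) ∈ closedBall (0 : X) 1 := fun i => by
    have hσ : |(σ i : ℝ)| ≤ 1 := by cases σ i <;> simp
    simpa [norm_smul] using mul_le_one₀ hσ (norm_nonneg _) (mem_closedBall_zero_iff.mp (hx (n i)))
  obtain ⟨m, hm, hmσ⟩ := exists_injective_forall_mem_of_forall_infinite _ fun i =>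
    infinite_setOf_dist_lt_of_closedBall_subset_closure hdense (hσx i) hδ
  set E := ∑ i, ‖x (m i) - (σ i : ℝ) • x (n i)‖
  have hE : 2 * E ≤ ε := by
    have hEδ : E ≤ Fintype.card ι * δ := by
      calc E ≤ ∑ _i : ι, δ := Finset.sum_le_sum fun i _ =>
            (dist_eq_norm (x (m i)) _).symm.trans_le (hmσ i).out.le
        _ = Fintype.card ι * δ := by simp
    have : 2 * (Fintype.card ι * δ) ≤ ε := by
      rw [← mul_assoc, mul_div_assoc', div_le_iff₀ (by positivity)]
      nlinarith
    linarith
  have hm_dom : |∑ i, a (m i)| ≤ ‖∑ i, x (m i)‖ := by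
    simpa [Finset.sum_image hm.injOn] using h (Finset.univ.image m)
  have ha : |∑ i, σ i * a (n i) - ∑ i, a (m i)| ≤ E := by
    rw [← Finset.sum_sub_distrib]
    refine (Finset.abs_sum_le_sum_abs _ _).trans (Finset.sum_le_sum fun i _ => ?_)
    simpa [abs_sub_comm] using h.abs_sub_sign_mul_le hdense hx (m i) (n i) (σ i)
  have hx' : ‖∑ i, x (m i) - ∑ i, (σ i : ℝ) • x (n i)‖ ≤ E := by
    rw [← Finset.sum_sub_distrib]
    exact norm_sum_le _ _
  linarith [abs_sub_abs_le_abs_sub (∑ i, σ i * a (n i)) (∑ i, a (m i)),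
    norm_sub_norm_le (∑ i, x (m i)) (∑ i, (σ i : ℝ) • x (n i))]

theorem abs_sum_intCast_mul_le (h : AbsSumLeNormSum a x)
    (hdense : closedBall (0 : X) 1 ⊆ closure (range x)) (hx : ∀ n, x n ∈ closedBall (0 : X) 1)
    (s : Finset ℕ) (c : ℕ → ℤ) : |∑ n ∈ s, (c n : ℝ) * a n| ≤ ‖∑ n ∈ s, (c n : ℝ) • x n‖ := by
  -- `c n • x n` as `|c n|` copies of `sign (c n) • x n`
  have := h.abs_sum_sign_mul_le hdense hx (ι := Σ n : s, Fin (c n).natAbs) (fun p => p.1)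
    (fun p => SignType.sign (c p.1 : ℝ))
  have hsign : ∀ z : ℤ, |(z : ℝ)| * (SignType.sign z : ℝ) = z := fun z => by
    exact_mod_cast abs_mul_sign z
  simpa [Fintype.sum_sigma, ← Nat.cast_smul_eq_nsmul ℝ, smul_smul, ← mul_assoc, hsign,
    Finset.sum_attach s fun n => (c n : ℝ) * a n,
    Finset.sum_attach s fun n => (c n : ℝ) • x n] using this

theorem abs_sum_mul_le (h : AbsSumLeNormSum a x)
    (hdense : closedBall (0 : X) 1 ⊆ closure (range x)) (hx : ∀ n, x n ∈ closedBall (0 : X) 1)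
    (s : Finset ℕ) (c : ℕ → ℝ) : |∑ n ∈ s, c n * a n| ≤ ‖∑ n ∈ s, c n • x n‖ := by
  set q : ℕ → ℕ → ℝ := fun d n => (⌊d * c n⌋ : ℝ) / d
  have hq : ∀ n, Tendsto (fun d => q d n) atTop (𝓝 (c n)) := fun n =>
    tendsto_intFloor_mul_div_atTop (c n)
  refine le_of_tendsto_of_tendsto' ((tendsto_finsetSum s fun n _ => (hq n).mul_const (a n)).abs)
    ((tendsto_finsetSum s fun n _ => (hq n).smul_const (x n)).norm) fun d => ?_
  have := h.abs_sum_intCast_mul_le hdense hx s fun n => ⌊d * c n⌋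
  simp only [q, div_eq_inv_mul, mul_assoc, mul_smul, ← Finset.mul_sum, ← Finset.smul_sum, abs_mul,
    norm_smul, Real.norm_eq_abs]
  exact mul_le_mul_of_nonneg_left this (abs_nonneg _)

end AbsSumLeNormSum

end

theorem stmt6_general (X : Type*) [NormedAddCommGroup X] [NormedSpace ℝ X]
    (x : ℕ → X) (hx : ∀ n, x n ∈ Metric.closedBall (0 : X) 1)
    (hdense : Metric.closedBall (0 : X) 1 ⊆ closure (Set.range x))
    (a : ℕ → ℝ)
    (hle : ∀ M : Finset ℕ, |∑ n ∈ M, a n| ≤ ‖∑ n ∈ M, x n‖) :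
    ∃ f : X →L[ℝ] ℝ, ‖f‖ ≤ 1 ∧ ∀ n, f (x n) = a n := by
  obtain ⟨f, hf, hfT⟩ := exists_dual_comp_eq_of_abs_le (Finsupp.linearCombination ℝ x)
    (Finsupp.linearCombination ℝ a) fun c => by
      simpa [Finsupp.linearCombination_apply, Finsupp.sum] using
        AbsSumLeNormSum.abs_sum_mul_le hle hdense hx c.support c
  exact ⟨f, hf, fun n => by simpa using hfT (Finsupp.single n 1)⟩

/-- If `(xₙ)` is dense in the closed unit ball of a separable Banach space `X` and real
numbers `aₙ ∈ [-1,1]` satisfy `|∑_{n∈M} aₙ| ≤ ‖∑_{n∈M} xₙ‖` for every finite `M`, then there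
is a norm-one-bounded functional `f` with `f (xₙ) = aₙ` for all `n`. -/
theorem stmt6 (X : Type*) [NormedAddCommGroup X] [NormedSpace ℝ X] [CompleteSpace X]
    [TopologicalSpace.SeparableSpace X]
    (x : ℕ → X) (hx : ∀ n, x n ∈ Metric.closedBall (0 : X) 1)
    (hdense : Metric.closedBall (0 : X) 1 ⊆ closure (Set.range x))
    (a : ℕ → ℝ) (ha : ∀ n, a n ∈ Set.Icc (-1 : ℝ) 1)
    (hle : ∀ M : Finset ℕ, |∑ n ∈ M, a n| ≤ ‖∑ n ∈ M, x n‖) :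
    ∃ f : X →L[ℝ] ℝ, ‖f‖ ≤ 1 ∧ ∀ n, f (x n) = a n :=
  stmt6_general X x hx hdense a hle
end

section
/- Let f : B_X → ℝ be a 1-Lipschitz function on the closed unit ball of a real Banach space X such that f(u+v) = f(u) + f(v) whenever u, v, u+v ∈ B_X. Then f(αu) = α·f(u) whenever u, αu ∈ B_X and α ∈ ℝ, and f extends uniquely to a continuous linear functional on X of norm at most 1. -/
/-!
Additivity on the ball alone makes `N • f (N⁻¹ • x)` independent of the integer `N ≥ ‖x‖`,
because `f (m • w) = m • f w` whenever `m • w` lies in the ball. This defines an additive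
extension of `f` to all of `X`, and the extension keeps the Lipschitz constant of `f`, since
rescaling by `N` multiplies distances on both sides by `N`. A continuous additive map between
real normed spaces is `ℝ`-linear, which yields the functional and, restricted to the ball, the
homogeneity of `f`. Uniqueness holds because an additive map is determined by its values on the
ball.
-/

open Metric
open scoped NNReal

def IsAdditiveOnUnitBall {X E : Type*} [NormedAddCommGroup X] [Add E] (f : X → E) : Prop :=
  ∀ u v : X, u ∈ closedBall (0 : X) 1 → v ∈ closedBall (0 : X) 1 →
    u + v ∈ closedBall (0 : X) 1 → f (u + v) = f u + f v

noncomputable def unitBallExtension {X E : Type*} [NormedAddCommGroup X] [NormedSpace ℝ X]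
    [AddCommMonoid E] (f : X → E) (x : X) : E :=
  (⌈‖x‖⌉₊ + 1) • f (((⌈‖x‖⌉₊ + 1 : ℕ) : ℝ)⁻¹ • x)

theorem inv_natCast_smul_mem_closedBall {X : Type*} [NormedAddCommGroup X] [NormedSpace ℝ X]
    {x : X} {n : ℕ} (hx : ‖x‖ ≤ n) : (n : ℝ)⁻¹ • x ∈ closedBall (0 : X) 1 := by
  rw [mem_closedBall_zero_iff, norm_smul, norm_inv, Real.norm_natCast]
  exact inv_mul_le_one_of_le₀ hx (Nat.cast_nonneg n)

theorem norm_le_ceil_add_one {X : Type*} [NormedAddCommGroup X] (x : X) :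
    ‖x‖ ≤ (⌈‖x‖⌉₊ + 1 : ℕ) := by
  push_cast; linarith [Nat.le_ceil ‖x‖]

theorem coe_eq_unitBallExtension {X E F : Type*} [NormedAddCommGroup X] [NormedSpace ℝ X]
    [AddCommMonoid E] [FunLike F X E] [AddMonoidHomClass F X E] {f : X → E} (g : F)
    (hg : Set.EqOn g f (closedBall (0 : X) 1)) : ⇑g = unitBallExtension f := by
  funext x
  set N := ⌈‖x‖⌉₊ + 1
  have hN : (N : ℝ) ≠ 0 := by positivity
  rw [unitBallExtension, ← hg (inv_natCast_smul_mem_closedBall (norm_le_ceil_add_one x)),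
    ← map_nsmul, ← Nat.cast_smul_eq_nsmul ℝ, smul_smul, mul_inv_cancel₀ hN, one_smul]

namespace IsAdditiveOnUnitBall

section AddCommGroup

variable {X E : Type*} [NormedAddCommGroup X] [AddCommGroup E] {f : X → E}

theorem map_zero (hf : IsAdditiveOnUnitBall f) : f 0 = 0 := by
  simpa using hf 0 0 (by simp) (by simp) (by simp)

variable [NormedSpace ℝ X]

theorem map_nsmul (hf : IsAdditiveOnUnitBall f) (n : ℕ) {v : X} (hnv : ‖n • v‖ ≤ 1) :
    f (n • v) = n • f v := by
  have norm_eq (k : ℕ) : ‖k • v‖ = k * ‖v‖ := by rw [RCLike.norm_nsmul ℝ, nsmul_eq_mul]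
  induction n with
  | zero => simpa using hf.map_zero
  | succ n ih =>
    have hle : ((n : ℝ) + 1) * ‖v‖ ≤ 1 := by rw [norm_eq] at hnv; exact_mod_cast hnv
    have hv : ‖v‖ ≤ 1 := by nlinarith [norm_nonneg v, (n.cast_nonneg : (0 : ℝ) ≤ n)]
    have hn : ‖n • v‖ ≤ 1 := by rw [norm_eq]; nlinarith [norm_nonneg v]
    rw [succ_nsmul, hf _ _ (mem_closedBall_zero_iff.2 hn) (mem_closedBall_zero_iff.2 hv)
      (by rwa [← succ_nsmul, mem_closedBall_zero_iff]), ih hn, succ_nsmul]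

theorem nsmul_map_inv_smul_eq_mul (hf : IsAdditiveOnUnitBall f) {x : X} {n : ℕ}
    (hx : ‖x‖ ≤ n) {m : ℕ} (hm : 0 < m) :
    n • f ((n : ℝ)⁻¹ • x) = (n * m) • f (((n * m : ℕ) : ℝ)⁻¹ • x) := by
  have hsplit : (n : ℝ)⁻¹ • x = m • (((n * m : ℕ) : ℝ)⁻¹ • x) := by
    rw [← Nat.cast_smul_eq_nsmul ℝ, smul_smul]
    push_cast
    field_simp
  have hball := mem_closedBall_zero_iff.1 (inv_natCast_smul_mem_closedBall hx)
  rw [hsplit, hf.map_nsmul m (hsplit ▸ hball), mul_nsmul']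

theorem unitBallExtension_eq (hf : IsAdditiveOnUnitBall f) {x : X} {n : ℕ} (hn : 0 < n)
    (hx : ‖x‖ ≤ n) : unitBallExtension f x = n • f ((n : ℝ)⁻¹ • x) := by
  rw [unitBallExtension, hf.nsmul_map_inv_smul_eq_mul (norm_le_ceil_add_one x) hn,
    hf.nsmul_map_inv_smul_eq_mul hx (Nat.succ_pos _), mul_comm]

theorem unitBallExtension_eq_of_mem (hf : IsAdditiveOnUnitBall f) {u : X}
    (hu : u ∈ closedBall (0 : X) 1) : unitBallExtension f u = f u := by
  simpa using hf.unitBallExtension_eq one_pos (by simpa using hu)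

theorem unitBallExtension_add (hf : IsAdditiveOnUnitBall f) (x y : X) :
    unitBallExtension f (x + y) = unitBallExtension f x + unitBallExtension f y := by
  obtain ⟨n, hn⟩ := exists_nat_gt (‖x‖ + ‖y‖)
  have hn0 : 0 < n := Nat.cast_pos.1 ((by positivity : (0 : ℝ) ≤ ‖x‖ + ‖y‖).trans_lt hn)
  have hx : ‖x‖ ≤ n := by linarith [norm_nonneg y]
  have hy : ‖y‖ ≤ n := by linarith [norm_nonneg x]
  have hxy : ‖x + y‖ ≤ n := by linarith [norm_add_le x y]
  rw [hf.unitBallExtension_eq hn0 hxy, hf.unitBallExtension_eq hn0 hx,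
    hf.unitBallExtension_eq hn0 hy, smul_add,
    hf _ _ (inv_natCast_smul_mem_closedBall hx)
    (inv_natCast_smul_mem_closedBall hy)
    (smul_add ((n : ℝ)⁻¹) x y ▸ inv_natCast_smul_mem_closedBall hxy), smul_add]

noncomputable def extendAddHom (hf : IsAdditiveOnUnitBall f) : X →+ E where
  toFun := unitBallExtension f
  map_zero' :=
    (hf.unitBallExtension_eq_of_mem (mem_closedBall_self zero_le_one)).trans hf.map_zero
  map_add' := hf.unitBallExtension_add

end AddCommGroup

section NormedAddCommGroup

variable {X E : Type*} [NormedAddCommGroup X] [NormedSpace ℝ X] [NormedAddCommGroup E]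
  {f : X → E} {K : ℝ≥0}

theorem lipschitzWith_unitBallExtension (hf : IsAdditiveOnUnitBall f)
    (hK : LipschitzOnWith K f (closedBall (0 : X) 1)) :
    LipschitzWith K (unitBallExtension f) := by
  refine LipschitzWith.of_dist_le_mul fun x y => ?_
  obtain ⟨n, hn⟩ := exists_nat_gt (‖x‖ + ‖y‖)
  have hn0 : 0 < n := Nat.cast_pos.1 ((by positivity : (0 : ℝ) ≤ ‖x‖ + ‖y‖).trans_lt hn)
  have hx : ‖x‖ ≤ n := by linarith [norm_nonneg y]
  have hy : ‖y‖ ≤ n := by linarith [norm_nonneg x]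
  rw [hf.unitBallExtension_eq hn0 hx, hf.unitBallExtension_eq hn0 hy, dist_eq_norm, ← smul_sub]
  calc ‖n • (f ((n : ℝ)⁻¹ • x) - f ((n : ℝ)⁻¹ • y))‖
      ≤ n * dist (f ((n : ℝ)⁻¹ • x)) (f ((n : ℝ)⁻¹ • y)) := by
        rw [dist_eq_norm]; exact norm_nsmul_le
    _ ≤ n * (K * dist ((n : ℝ)⁻¹ • x) ((n : ℝ)⁻¹ • y)) := by
        gcongr
        exact hK.dist_le_mul _ (inv_natCast_smul_mem_closedBall hx) _
          (inv_natCast_smul_mem_closedBall hy)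
    _ = K * dist x y := by
        rw [dist_smul₀, Real.norm_eq_abs, abs_inv, Nat.abs_cast]
        field_simp

variable [NormedSpace ℝ E]

noncomputable def extendCLM (hf : IsAdditiveOnUnitBall f)
    (hK : LipschitzOnWith K f (closedBall (0 : X) 1)) : X →L[ℝ] E :=
  hf.extendAddHom.toRealLinearMap (hf.lipschitzWith_unitBallExtension hK).continuous

theorem norm_extendCLM_le (hf : IsAdditiveOnUnitBall f)
    (hK : LipschitzOnWith K f (closedBall (0 : X) 1)) : ‖hf.extendCLM hK‖ ≤ K :=
  ContinuousLinearMap.opNorm_le_of_lipschitz (hf.lipschitzWith_unitBallExtension hK)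

end NormedAddCommGroup

end IsAdditiveOnUnitBall

theorem stmt7_general (X : Type*) [NormedAddCommGroup X] [NormedSpace ℝ X]
    (f : X → ℝ)
    (hlip : ∀ u v : X, u ∈ Metric.closedBall (0 : X) 1 → v ∈ Metric.closedBall (0 : X) 1 →
      |f u - f v| ≤ ‖u - v‖)
    (hadd : ∀ u v : X, u ∈ Metric.closedBall (0 : X) 1 → v ∈ Metric.closedBall (0 : X) 1 →
      u + v ∈ Metric.closedBall (0 : X) 1 → f (u + v) = f u + f v) :
    (∀ (u : X) (α : ℝ), u ∈ Metric.closedBall (0 : X) 1 →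
      α • u ∈ Metric.closedBall (0 : X) 1 → f (α • u) = α * f u) ∧
    ∃! g : X →L[ℝ] ℝ, ‖g‖ ≤ 1 ∧ ∀ u ∈ Metric.closedBall (0 : X) 1, g u = f u := by
  have hf : IsAdditiveOnUnitBall f := hadd
  have hK : LipschitzOnWith 1 f (closedBall (0 : X) 1) :=
    LipschitzOnWith.mk_one fun u hu v hv => by
      rw [Real.dist_eq, dist_eq_norm]; exact hlip u v hu hv
  have hgf : ∀ u ∈ closedBall (0 : X) 1, hf.extendCLM hK u = f u :=
    fun u hu => hf.unitBallExtension_eq_of_mem hu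
  refine ⟨fun u α hu hαu => ?_, ⟨hf.extendCLM hK, ⟨hf.norm_extendCLM_le hK, hgf⟩, ?_⟩⟩
  · rw [← hgf u hu, ← hgf _ hαu, map_smul, smul_eq_mul]
  · rintro g ⟨-, hg⟩
    exact DFunLike.coe_injective (coe_eq_unitBallExtension g hg)

/-- A 1-Lipschitz, additive-on-the-ball function on the closed unit ball of a real Banach
space is homogeneous on the ball and extends uniquely to a continuous linear functional of
norm at most 1. -/
theorem stmt7 (X : Type*) [NormedAddCommGroup X] [NormedSpace ℝ X] [CompleteSpace X]
    (f : X → ℝ)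
    (hlip : ∀ u v : X, u ∈ Metric.closedBall (0 : X) 1 → v ∈ Metric.closedBall (0 : X) 1 →
      |f u - f v| ≤ ‖u - v‖)
    (hadd : ∀ u v : X, u ∈ Metric.closedBall (0 : X) 1 → v ∈ Metric.closedBall (0 : X) 1 →
      u + v ∈ Metric.closedBall (0 : X) 1 → f (u + v) = f u + f v) :
    (∀ (u : X) (α : ℝ), u ∈ Metric.closedBall (0 : X) 1 →
      α • u ∈ Metric.closedBall (0 : X) 1 → f (α • u) = α * f u) ∧
    ∃! g : X →L[ℝ] ℝ, ‖g‖ ≤ 1 ∧ ∀ u ∈ Metric.closedBall (0 : X) 1, g u = f u :=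
  stmt7_general X f hlip hadd
end

section
/- For every ε > 0, the set {F ∈ K(B) : diam(U ∩ F) < ε} is an F_σ subset of K(B), for every open subset U of B, where B is the closed unit ball of ℓ∞ with the weak* topology and K(B) is its hyperspace of compact subsets with the Vietoris topology, and diameters are measured in the ℓ∞ norm. -/
open Topology

/-- The closed unit ball of `ℓ∞` with its weak* topology, realized as the set of sequences
bounded by `1` with the topology of pointwise (coordinatewise) convergence. -/
def BallInfty : Type := {a : ℕ → ℝ // ∀ n, |a n| ≤ 1}

instance : TopologicalSpace BallInfty := instTopologicalSpaceSubtype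

/-- The diameter of a subset of the ball of `ℓ∞`, measured in the `ℓ∞` norm
(with the convention `diam ∅ = 0`, via `sSup ∅ = 0` in `ℝ`). -/
noncomputable def linftyDiam (S : Set BallInfty) : ℝ :=
  sSup {d : ℝ | ∃ a ∈ S, ∃ b ∈ S, d = ⨆ n, |a.1 n - b.1 n|}

/-- The Vietoris topology on subsets of a topological space. -/
def vietoris (α : Type*) [TopologicalSpace α] : TopologicalSpace (Set α) :=
  TopologicalSpace.generateFrom
    ({S | ∃ U : Set α, IsOpen U ∧ S = {K | K ⊆ U}} ∪
     {S | ∃ U : Set α, IsOpen U ∧ S = {K | (K ∩ U).Nonempty}})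

/-- The hyperspace `K(B_{ℓ∞})` of compact subsets of the ball, with the Vietoris topology. -/
def KB : Type := {F : Set BallInfty // IsCompact F}

instance : TopologicalSpace KB :=
  TopologicalSpace.induced Subtype.val (vietoris BallInfty)

lemma eval_cont (n : ℕ) : Continuous fun a : BallInfty => a.1 n :=
  (continuous_apply n).comp continuous_subtype_val

lemma two_bound (a b : BallInfty) (n : ℕ) : |a.1 n - b.1 n| ≤ 2 := by
  have h1 := abs_le.mp (a.2 n)
  have h2 := abs_le.mp (b.2 n)
  rw [abs_le]
  constructor <;> linarith

lemma bdd_range (a b : BallInfty) : BddAbove (Set.range fun n => |a.1 n - b.1 n|) := by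
  refine ⟨2, ?_⟩
  rintro x ⟨n, rfl⟩
  exact two_bound a b n

lemma linftyDiam_le_iff {S : Set BallInfty} {c : ℝ} (hc : 0 ≤ c) :
    linftyDiam S ≤ c ↔ ∀ a ∈ S, ∀ b ∈ S, ∀ n : ℕ, |a.1 n - b.1 n| ≤ c := by
  constructor
  · intro h a ha b hb n
    have h1 : |a.1 n - b.1 n| ≤ ⨆ m, |a.1 m - b.1 m| := le_ciSup (bdd_range a b) n
    have h2 : (⨆ m, |a.1 m - b.1 m|) ≤ linftyDiam S := by
      apply le_csSup
      · refine ⟨2, ?_⟩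
        rintro x ⟨p, _, q, _, rfl⟩
        exact ciSup_le fun m => two_bound p q m
      · exact ⟨a, ha, b, hb, rfl⟩
    linarith
  · intro h
    apply Real.sSup_le _ hc
    rintro d ⟨p, hp, q, hq, rfl⟩
    exact ciSup_le fun m => h p hp q hq m

lemma W_open (U : Set BallInfty) (hU : IsOpen U) (c : ℝ) :
    IsOpen[vietoris BallInfty]
      {K : Set BallInfty | ∃ a ∈ U ∩ K, ∃ b ∈ U ∩ K, ∃ n : ℕ, c < |a.1 n - b.1 n|} := by
  letI : TopologicalSpace (Set BallInfty) := vietoris BallInfty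
  have hgen : ∀ V : Set BallInfty, IsOpen V →
      IsOpen {K : Set BallInfty | (K ∩ V).Nonempty} :=
    fun V hV => TopologicalSpace.GenerateOpen.basic _ (Or.inr ⟨V, hV, rfl⟩)
  have key : {K : Set BallInfty | ∃ a ∈ U ∩ K, ∃ b ∈ U ∩ K, ∃ n : ℕ, c < |a.1 n - b.1 n|}
      = ⋃ (a : BallInfty) (b : BallInfty) (n : ℕ) (_ : a ∈ U) (_ : b ∈ U)
          (_ : c < |a.1 n - b.1 n|),
        ({K : Set BallInfty |
            (K ∩ (U ∩ {z | |z.1 n - a.1 n| < (|a.1 n - b.1 n| - c) / 2})).Nonempty} ∩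
         {K : Set BallInfty |
            (K ∩ (U ∩ {z | |z.1 n - b.1 n| < (|a.1 n - b.1 n| - c) / 2})).Nonempty}) := by
    ext K
    simp only [Set.mem_setOf_eq, Set.mem_iUnion, Set.mem_inter_iff]
    constructor
    · rintro ⟨a, ⟨haU, haK⟩, b, ⟨hbU, hbK⟩, n, hn⟩
      refine ⟨a, b, n, haU, hbU, hn, ⟨a, haK, haU, ?_⟩, ⟨b, hbK, hbU, ?_⟩⟩
      · show |a.1 n - a.1 n| < _
        rw [sub_self, abs_zero]; linarith
      · show |b.1 n - b.1 n| < _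
        rw [sub_self, abs_zero]; linarith
    · rintro ⟨a, b, n, haU, hbU, hn, ⟨a', ha'K, ha'U, ha'⟩, ⟨b', hb'K, hb'U, hb'⟩⟩
      refine ⟨a', ⟨ha'U, ha'K⟩, b', ⟨hb'U, hb'K⟩, n, ?_⟩
      simp only [Set.mem_setOf_eq] at ha' hb'
      have t1 : |a.1 n - b.1 n| ≤ |a.1 n - a'.1 n| + |a'.1 n - b.1 n| := abs_sub_le _ _ _
      have t2 : |a'.1 n - b.1 n| ≤ |a'.1 n - b'.1 n| + |b'.1 n - b.1 n| := abs_sub_le _ _ _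
      have e1 : |a.1 n - a'.1 n| = |a'.1 n - a.1 n| := abs_sub_comm _ _
      linarith
  rw [key]
  refine isOpen_iUnion fun a => isOpen_iUnion fun b => isOpen_iUnion fun n =>
    isOpen_iUnion fun _ => isOpen_iUnion fun _ => isOpen_iUnion fun _ => ?_
  exact (hgen _ (hU.inter (isOpen_lt ((eval_cont n).sub continuous_const).abs
      continuous_const))).inter
    (hgen _ (hU.inter (isOpen_lt ((eval_cont n).sub continuous_const).abs continuous_const)))

lemma closed_Pc (U : Set BallInfty) (hU : IsOpen U) (c : ℝ) :
    IsClosed {F : KB | ∀ a ∈ U ∩ F.1, ∀ b ∈ U ∩ F.1, ∀ n : ℕ, |a.1 n - b.1 n| ≤ c} := by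
  rw [← isOpen_compl_iff]
  have h : {F : KB | ∀ a ∈ U ∩ F.1, ∀ b ∈ U ∩ F.1, ∀ n : ℕ, |a.1 n - b.1 n| ≤ c}ᶜ
      = Subtype.val ⁻¹'
        {K : Set BallInfty | ∃ a ∈ U ∩ K, ∃ b ∈ U ∩ K, ∃ n : ℕ, c < |a.1 n - b.1 n|} := by
    ext F
    simp only [Set.mem_compl_iff, Set.mem_setOf_eq, Set.mem_preimage]
    push_neg
    rfl
  rw [h]
  exact ⟨_, W_open U hU c, rfl⟩

/-- For every `ε > 0` and every open `U ⊆ B_{ℓ∞}`, the set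
`{F ∈ K(B_{ℓ∞}) : diam (U ∩ F) < ε}` is `F_σ` in the Vietoris topology. -/
theorem stmt13 (ε : ℝ) (hε : 0 < ε) (U : Set BallInfty) (hU : IsOpen U) :
    ∃ C : ℕ → Set KB, (∀ n, IsClosed (C n)) ∧
      {F : KB | linftyDiam (U ∩ F.1) < ε} = ⋃ n, C n := by
  refine ⟨fun k => {F : KB | ∀ a ∈ U ∩ F.1, ∀ b ∈ U ∩ F.1, ∀ n : ℕ,
      |a.1 n - b.1 n| ≤ ε - ε / ((k : ℝ) + 2)}, fun k => closed_Pc U hU _, ?_⟩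
  have hc : ∀ k : ℕ, 0 ≤ ε - ε / ((k : ℝ) + 2) := by
    intro k
    have hk2 : (0:ℝ) < (k:ℝ) + 2 := by positivity
    have : ε / ((k:ℝ) + 2) ≤ ε := by
      rw [div_le_iff₀ hk2]; nlinarith
    linarith
  ext F
  simp only [Set.mem_setOf_eq, Set.mem_iUnion]
  constructor
  · intro h
    set d := linftyDiam (U ∩ F.1) with hd
    obtain ⟨k, hk⟩ := exists_nat_ge (ε / (ε - d))
    have hk2 : (0:ℝ) < (k:ℝ) + 2 := by positivity
    have hεd : 0 < ε - d := by linarith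
    have hle : ε / ((k:ℝ) + 2) ≤ ε - d := by
      rw [div_le_iff₀ hk2]
      have h2 : ε / (ε - d) ≤ (k:ℝ) + 2 := by linarith
      calc ε = (ε / (ε - d)) * (ε - d) := by field_simp
        _ ≤ ((k:ℝ) + 2) * (ε - d) := mul_le_mul_of_nonneg_right h2 hεd.le
        _ = (ε - d) * ((k:ℝ) + 2) := mul_comm _ _
    exact ⟨k, (linftyDiam_le_iff (hc k)).mp (by linarith)⟩
  · rintro ⟨k, hk⟩
    have hk2 : (0:ℝ) < (k:ℝ) + 2 := by positivity
    have h1 := (linftyDiam_le_iff (hc k)).mpr hk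
    have h2 : 0 < ε / ((k:ℝ) + 2) := div_pos hε hk2
    linarith
end

section
/- Let P be a Polish space, X a compact metrizable space, α a countable ordinal with α ≥ 1, and f : P → K(X) a map into the hyperspace of compact subsets of X with the Vietoris topology. If for every open W ⊆ X the set {p ∈ P : f(p) ⊆ W} belongs to Σ⁰_α(P) ∪ Π⁰_α(P), then f is Σ⁰_{α+1}-measurable. -/
open Topology

/-- The additive Borel class `Σ⁰_o` of subsets of a topological space: `Σ⁰_o` for `o ≤ 1`
is the class of open sets, and for `o > 1` it consists of countable unions of sets whose
complements lie in `Σ⁰_β` for some `β < o`. -/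
noncomputable def sigma0 {X : Type*} [TopologicalSpace X] (o : Ordinal.{0}) :
    Set (Set X) :=
  if o ≤ 1 then {s | IsOpen s}
  else {s | ∃ f : ℕ → Set X,
    (∀ n, ∃ β : Ordinal.{0}, ∃ _ : β < o, (f n)ᶜ ∈ sigma0 β) ∧ s = ⋃ n, f n}
termination_by o
decreasing_by assumption

/-- The multiplicative Borel class `Π⁰_o`: complements of `Σ⁰_o` sets. -/
noncomputable def pi0 {X : Type*} [TopologicalSpace X] (o : Ordinal.{0}) : Set (Set X) :=
  {s | sᶜ ∈ sigma0 o}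

/-!
For a countable basis `B` of `X`, the Vietoris topology on `K(X)` is generated by the countably
many sets `{K | K ⊆ W}` with `W` a finite union of members of `B` and `{K | K ∩ b ≠ ∅}` with
`b ∈ B`. Preimages of the former are `Σ⁰_α` or `Π⁰_α`, hence `Σ⁰_{α+1}`. Writing `b = ⋃ₙ Fₙ`
with `Fₙ` closed, the preimage of the latter is `⋃ₙ {p | f p ⊆ Fₙᶜ}ᶜ`, again `Σ⁰_{α+1}`. Since
`Σ⁰_{α+1}` is closed under finite intersections and countable unions, the preimage of every open
set is `Σ⁰_{α+1}`.
-/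

open Set TopologicalSpace

section BorelClasses

variable {Y : Type*} [TopologicalSpace Y] {o β γ : Ordinal.{0}} {s t : Set Y}

theorem sigma0_of_le_one (h : o ≤ 1) : sigma0 (X := Y) o = {s | IsOpen s} := by
  rw [sigma0, if_pos h]

theorem sigma0_of_one_lt (h : 1 < o) : sigma0 (X := Y) o =
    {s | ∃ f : ℕ → Set Y,
      (∀ n, ∃ β : Ordinal.{0}, ∃ _ : β < o, (f n)ᶜ ∈ sigma0 β) ∧ s = ⋃ n, f n} := by
  rw [sigma0, if_neg h.not_ge]

theorem mem_sigma0_of_compl_mem (h : 1 < o) (hβ : β < o) (hs : sᶜ ∈ sigma0 β) :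
    s ∈ sigma0 o := by
  rw [sigma0_of_one_lt h]
  exact ⟨fun _ => s, fun _ => ⟨β, hβ, hs⟩, (iUnion_const s).symm⟩

theorem empty_mem_sigma0 : (∅ : Set Y) ∈ sigma0 o := by
  rcases le_or_gt o 1 with h | h
  · rw [sigma0_of_le_one h]
    exact isOpen_empty
  · refine mem_sigma0_of_compl_mem h h ?_
    rw [compl_empty, sigma0_of_le_one le_rfl]
    exact isOpen_univ

theorem iUnion_nat_mem_sigma0 {s : ℕ → Set Y} (hs : ∀ n, s n ∈ sigma0 o) :
    ⋃ n, s n ∈ sigma0 o := by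
  rcases le_or_gt o 1 with h | h
  · rw [sigma0_of_le_one h] at hs ⊢
    exact isOpen_iUnion hs
  · rw [sigma0_of_one_lt h] at hs ⊢
    choose g hg hgs using hs
    refine ⟨fun k => g k.unpair.1 k.unpair.2, fun k => hg _ _, ?_⟩
    rw [iUnion_unpair]
    exact iUnion_congr hgs

theorem iUnion_mem_sigma0 {ι : Sort*} [Countable ι] {s : ι → Set Y}
    (hs : ∀ i, s i ∈ sigma0 o) : ⋃ i, s i ∈ sigma0 o := by
  cases isEmpty_or_nonempty ι
  · rw [iUnion_of_empty]
    exact empty_mem_sigma0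
  · obtain ⟨e, he⟩ := exists_surjective_nat ι
    rw [← he.iUnion_comp]
    exact iUnion_nat_mem_sigma0 fun n => hs (e n)

theorem biUnion_mem_sigma0 {ι : Type*} {I : Set ι} (hI : I.Countable) {s : ι → Set Y}
    (hs : ∀ i ∈ I, s i ∈ sigma0 o) : ⋃ i ∈ I, s i ∈ sigma0 o := by
  have := hI.to_subtype
  rw [biUnion_eq_iUnion]
  exact iUnion_mem_sigma0 fun i => hs i i.2

theorem union_mem_sigma0 (hs : s ∈ sigma0 o) (ht : t ∈ sigma0 o) : s ∪ t ∈ sigma0 o := by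
  rw [union_eq_iUnion]
  exact iUnion_mem_sigma0 fun b => by cases b <;> assumption

variable [PseudoMetrizableSpace Y]

theorem IsOpen.mem_sigma0 (hs : IsOpen s) : s ∈ sigma0 o := by
  rcases le_or_gt o 1 with h | h
  · rw [sigma0_of_le_one h]
    exact hs
  · let := pseudoMetrizableSpacePseudoMetric Y
    obtain ⟨F, hF, -, rfl, -⟩ := hs.exists_iUnion_isClosed
    refine iUnion_mem_sigma0 fun n => mem_sigma0_of_compl_mem h h ?_
    rw [sigma0_of_le_one le_rfl]
    exact (hF n).isOpen_compl

theorem sigma0_mono (hβγ : β ≤ γ) : sigma0 (X := Y) β ⊆ sigma0 γ := by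
  intro s hs
  rcases le_or_gt β 1 with h | h
  · rw [sigma0_of_le_one h] at hs
    exact hs.mem_sigma0
  · rw [sigma0_of_one_lt h] at hs
    obtain ⟨f, hf, rfl⟩ := hs
    refine iUnion_mem_sigma0 fun n => ?_
    obtain ⟨δ, hδ, hfδ⟩ := hf n
    exact mem_sigma0_of_compl_mem (h.trans_le hβγ) (hδ.trans_le hβγ) hfδ

theorem mem_sigma0_succ_of_mem_sigma0_or_pi0 (h1 : 1 ≤ o) (hs : s ∈ sigma0 o ∨ s ∈ pi0 o) :
    s ∈ sigma0 (o + 1) := by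
  rcases hs with hs | hs
  · exact sigma0_mono (lt_add_one o).le hs
  · exact mem_sigma0_of_compl_mem (h1.trans_lt (lt_add_one o)) (lt_add_one o) hs

theorem compl_mem_sigma0_succ_of_mem_sigma0_or_pi0 (h1 : 1 ≤ o)
    (hs : s ∈ sigma0 o ∨ s ∈ pi0 o) : sᶜ ∈ sigma0 (o + 1) := by
  refine mem_sigma0_succ_of_mem_sigma0_or_pi0 h1 (hs.symm.imp id fun hs => ?_)
  rwa [pi0, mem_ofPred_eq, compl_compl]

theorem inter_mem_sigma0 (hs : s ∈ sigma0 o) (ht : t ∈ sigma0 o) : s ∩ t ∈ sigma0 o := by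
  rcases le_or_gt o 1 with h | h
  · rw [sigma0_of_le_one h] at *
    exact hs.inter ht
  rw [sigma0_of_one_lt h] at hs ht
  obtain ⟨f, hf, rfl⟩ := hs
  obtain ⟨g, hg, rfl⟩ := ht
  rw [iUnion_inter_iUnion]
  refine iUnion_mem_sigma0 fun m => iUnion_mem_sigma0 fun n => ?_
  obtain ⟨β, hβ, hfβ⟩ := hf m
  obtain ⟨γ, hγ, hgγ⟩ := hg n
  refine mem_sigma0_of_compl_mem h (max_lt hβ hγ) ?_
  rw [compl_inter]
  exact union_mem_sigma0 (sigma0_mono (le_max_left β γ) hfβ)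
    (sigma0_mono (le_max_right β γ) hgγ)

theorem biInter_mem_sigma0 {ι : Type*} {I : Set ι} (hI : I.Finite) {s : ι → Set Y}
    (hs : ∀ i ∈ I, s i ∈ sigma0 o) : ⋂ i ∈ I, s i ∈ sigma0 o := by
  induction I, hI using Set.Finite.induction_on with
  | empty => simpa using isOpen_univ.mem_sigma0
  | @insert i I _ _ ih =>
    rw [biInter_insert]
    exact inter_mem_sigma0 (hs i (mem_insert i I)) (ih fun j hj => hs j (mem_insert_of_mem i hj))

theorem preimage_mem_sigma0_of_isOpen_generateFrom {Z : Type*} {f : Y → Z}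
    {S : Set (Set Z)} (hSc : S.Countable) (hS : ∀ s ∈ S, f ⁻¹' s ∈ sigma0 o) {U : Set Z}
    (hU : IsOpen[generateFrom S] U) : f ⁻¹' U ∈ sigma0 o := by
  let := generateFrom S
  have hbasis := isTopologicalBasis_of_subbasis (rfl : generateFrom S = generateFrom S)
  rw [hbasis.open_eq_sUnion' hU, preimage_sUnion]
  refine biUnion_mem_sigma0 (((countable_ofPred_finite_subset hSc).image _).mono
    (sep_subset _ _)) ?_
  rintro _ ⟨⟨T, ⟨hTf, hTS⟩, rfl⟩, -⟩
  rw [preimage_sInter]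
  exact biInter_mem_sigma0 hTf fun s hs => hS s (hTS hs)

end BorelClasses

theorem setOf_inter_nonempty_mem_sigma0_succ {P X : Type*} [TopologicalSpace P]
    [PseudoMetrizableSpace P] [TopologicalSpace X] [PseudoMetrizableSpace X]
    {o : Ordinal.{0}} (h1 : 1 ≤ o) {g : P → Set X}
    (hg : ∀ W, IsOpen W → {p | g p ⊆ W} ∈ sigma0 o ∨ {p | g p ⊆ W} ∈ pi0 o)
    {U : Set X} (hU : IsOpen U) : {p | (g p ∩ U).Nonempty} ∈ sigma0 (o + 1) := by
  let := pseudoMetrizableSpacePseudoMetric X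
  obtain ⟨F, hF, -, rfl, -⟩ := hU.exists_iUnion_isClosed
  have : {p | (g p ∩ ⋃ n, F n).Nonempty} = ⋃ n, {p | g p ⊆ (F n)ᶜ}ᶜ := by
    ext p
    simp [inter_iUnion, subset_compl_iff_disjoint_right, not_disjoint_iff_nonempty_inter]
  rw [this]
  exact iUnion_mem_sigma0 fun n =>
    compl_mem_sigma0_succ_of_mem_sigma0_or_pi0 h1 (hg _ (hF n).isOpen_compl)

section Vietoris

variable {X : Type*} [TopologicalSpace X] {B : Set (Set X)}

def vietorisSubbasis (B : Set (Set X)) : Set (Set {K : Set X // IsCompact K}) :=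
  (fun T => {K | K.1 ⊆ ⋃₀ T}) '' {T | T.Finite ∧ T ⊆ B} ∪
    (fun b => {K | (K.1 ∩ b).Nonempty}) '' B

theorem Set.Countable.vietorisSubbasis (hB : B.Countable) : (vietorisSubbasis B).Countable :=
  ((countable_ofPred_finite_subset hB).image _).union (hB.image _)

theorem TopologicalSpace.IsTopologicalBasis.exists_finite_subset_sUnion_of_isCompact
    (hB : IsTopologicalBasis B) {K U : Set X} (hK : IsCompact K) (hU : IsOpen U) (hKU : K ⊆ U) :
    ∃ T, (T.Finite ∧ T ⊆ B) ∧ ⋃₀ T ⊆ U ∧ K ⊆ ⋃₀ T := by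
  rw [hB.open_eq_sUnion' hU, sUnion_eq_biUnion] at hKU
  obtain ⟨T, hTB, hTf, hKT⟩ := hK.elim_finite_subcover_image (c := id)
    (fun b hb => hB.isOpen hb.1) hKU
  exact ⟨T, ⟨hTf, fun b hb => (hTB hb).1⟩, sUnion_subset fun b hb => (hTB hb).2,
    by rwa [sUnion_eq_biUnion]⟩

theorem TopologicalSpace.IsTopologicalBasis.generateFrom_vietorisSubbasis_le
    (hB : IsTopologicalBasis B) :
    generateFrom (vietorisSubbasis B) ≤ (_root_.vietoris X).induced Subtype.val := by
  rw [_root_.vietoris, induced_generateFrom_eq]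
  let _ := generateFrom (vietorisSubbasis B)
  refine le_generateFrom ?_
  rintro _ ⟨_, ⟨U, hU, rfl⟩ | ⟨U, hU, rfl⟩, rfl⟩
  · have : Subtype.val ⁻¹' {K | K ⊆ U} = ⋃ T ∈ {T | (T.Finite ∧ T ⊆ B) ∧ ⋃₀ T ⊆ U},
        {K : {K : Set X // IsCompact K} | K.1 ⊆ ⋃₀ T} := by
      ext ⟨K, hK⟩
      simp only [mem_preimage, mem_ofPred_eq, mem_iUnion, exists_prop]
      refine ⟨fun hKU => ?_, fun ⟨T, ⟨_, hTU⟩, hKT⟩ => hKT.trans hTU⟩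
      obtain ⟨T, hT, hTU, hKT⟩ := hB.exists_finite_subset_sUnion_of_isCompact hK hU hKU
      exact ⟨T, ⟨hT, hTU⟩, hKT⟩
    rw [this]
    exact isOpen_biUnion fun T hT => isOpen_generateFrom_of_mem (Or.inl ⟨T, hT.1, rfl⟩)
  · have : Subtype.val ⁻¹' {K | (K ∩ U).Nonempty} = ⋃ b ∈ {b ∈ B | b ⊆ U},
        {K : {K : Set X // IsCompact K} | (K.1 ∩ b).Nonempty} := by
      ext ⟨K, hK⟩
      simp only [mem_preimage, mem_ofPred_eq, mem_iUnion, exists_prop]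
      refine ⟨fun ⟨x, hxK, hxU⟩ => ?_,
        fun ⟨b, ⟨_, hbU⟩, hKb⟩ => hKb.mono (inter_subset_inter_right K hbU)⟩
      obtain ⟨b, hb, hxb, hbU⟩ := hB.exists_subset_of_mem_open hxU hU
      exact ⟨b, ⟨hb, hbU⟩, x, hxK, hxb⟩
    rw [this]
    exact isOpen_biUnion fun b hb => isOpen_generateFrom_of_mem (Or.inr ⟨b, hb.1, rfl⟩)

end Vietoris

theorem stmt15_general (P X : Type) [TopologicalSpace P] [PolishSpace P]
    [TopologicalSpace X] [CompactSpace X] [TopologicalSpace.MetrizableSpace X]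
    (α : Ordinal.{0}) (hα1 : 1 ≤ α)
    (f : P → {K : Set X // IsCompact K})
    (h : ∀ W : Set X, IsOpen W →
      {p : P | (f p).1 ⊆ W} ∈ sigma0 α ∨ {p : P | (f p).1 ⊆ W} ∈ pi0 α) :
    ∀ U : Set {K : Set X // IsCompact K},
      IsOpen[TopologicalSpace.induced Subtype.val (vietoris X)] U →
      f ⁻¹' U ∈ sigma0 (α + 1) := by
  intro U hU
  obtain ⟨B, hBc, -, hB⟩ := exists_countable_basis X
  refine preimage_mem_sigma0_of_isOpen_generateFrom hBc.vietorisSubbasis ?_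
    (hB.generateFrom_vietorisSubbasis_le U hU)
  rintro _ (⟨T, ⟨-, hTB⟩, rfl⟩ | ⟨b, hb, rfl⟩)
  · exact mem_sigma0_succ_of_mem_sigma0_or_pi0 hα1
      (h _ (isOpen_sUnion fun t ht => hB.isOpen (hTB ht)))
  · exact setOf_inter_nonempty_mem_sigma0_succ hα1 h (hB.isOpen hb)

/-- If `P` is Polish, `X` compact metrizable, `α ≥ 1` a countable ordinal, and
`f : P → K(X)` satisfies `{p : f p ⊆ W} ∈ Σ⁰_α ∪ Π⁰_α` for every open `W ⊆ X`, then `f`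
is `Σ⁰_{α+1}`-measurable with respect to the Vietoris topology on `K(X)`. -/
theorem stmt15 (P X : Type) [TopologicalSpace P] [PolishSpace P]
    [TopologicalSpace X] [CompactSpace X] [TopologicalSpace.MetrizableSpace X]
    (α : Ordinal.{0}) (hα1 : 1 ≤ α) (hαc : α.card ≤ Cardinal.aleph0)
    (f : P → {K : Set X // IsCompact K})
    (h : ∀ W : Set X, IsOpen W →
      {p : P | (f p).1 ⊆ W} ∈ sigma0 α ∨ {p : P | (f p).1 ⊆ W} ∈ pi0 α) :
    ∀ U : Set {K : Set X // IsCompact K},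
      IsOpen[TopologicalSpace.induced Subtype.val (vietoris X)] U →
      f ⁻¹' U ∈ sigma0 (α + 1) :=
  stmt15_general P X α hα1 f h
end

section
/- Let X be a Banach space isometric to L_p(μ) for a measure space (Ω, S, μ) possessing an atom ω with μ({ω}) = 1, where 1 ≤ p < 2. Then there exists ε₀ > 0 such that for all 0 < ε < ε₀ there are no f, g ∈ L_p(μ) with (f,g) (1+ε)-equivalent to the canonical basis of ℓ_p² and 2^{1/p}·δ_ω = f + g, where δ_ω is the indicator function of {ω}. -/
/-! Since `f + g` vanishes off the atom, `g = -f` there; with `s` the mass of `|f|^p` off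
the atom and `α + β = 2^{1/p}` the values of `f`, `g` at it, `‖f‖^p = |α|^p + s`,
`‖g‖^p = |β|^p + s` and `‖f - g‖^p = |α - β|^p + 2^p s`. One of `|α|`, `|β|` is at
least `(2^{1/p} + |α - β|) / 2`, so superadditivity of `t ↦ t^p` turns the
`(1+ε)`-equivalence bounds into `2 + 2 / (1+ε)^p < 2^p (1+ε)^p`, which fails for small `ε`
because `2^p < 4`. -/

open MeasureTheory

/-- `(f, g)` is `K`-equivalent to the canonical basis of `ℓ_p²`. -/
def EquivLp2 {X : Type*} [NormedAddCommGroup X] [NormedSpace ℝ X]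
    (p K : ℝ) (y₁ y₂ : X) : Prop :=
  ∀ a b : ℝ, ¬(a = 0 ∧ b = 0) →
    K⁻¹ * (|a| ^ p + |b| ^ p) ^ (1 / p) < ‖a • y₁ + b • y₂‖ ∧
    ‖a • y₁ + b • y₂‖ < K * (|a| ^ p + |b| ^ p) ^ (1 / p)

open Filter Topology

theorem Real.rpow_add_lt_two_rpow_mul_of_add_eq {p c α β s M L : ℝ} (hp : 1 ≤ p)
    (hc : 0 ≤ c) (hαβ : α + β = c) (hα : |α| ^ p + s < M) (hβ : |β| ^ p + s < M)
    (hL : L < |α - β| ^ p + 2 ^ p * s) :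
    c ^ p + L < 2 ^ p * M := by
  set d := |α - β|
  have hd : 0 ≤ d := abs_nonneg _
  -- `α + β + |α - β| = 2 max α β`
  have hmax : (c + d) / 2 ≤ max |α| |β| := by
    rcases le_total α β with h | h
    · have : d = β - α := (abs_sub_comm α β).trans (abs_of_nonneg (by linarith))
      exact le_max_of_le_right (by linarith [le_abs_self β])
    · have : d = α - β := abs_of_nonneg (by linarith)
      exact le_max_of_le_left (by linarith [le_abs_self α])
  have hmaxM : max |α| |β| ^ p + s < M := by
    rcases max_choice |α| |β| with h | h <;> rw [h] <;> assumption
  calc c ^ p + L < c ^ p + d ^ p + 2 ^ p * s := by linarith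
    _ ≤ (c + d) ^ p + 2 ^ p * s := by gcongr; exact Real.add_rpow_le_rpow_add hc hd hp
    _ = 2 ^ p * (((c + d) / 2) ^ p + s) := by
      rw [Real.div_rpow (by positivity) zero_le_two, mul_add, mul_div_cancel₀]
      positivity
    _ ≤ 2 ^ p * (max |α| |β| ^ p + s) := by gcongr
    _ < 2 ^ p * M := by gcongr

theorem eventually_two_rpow_mul_one_add_rpow_lt {p : ℝ} (hp : p < 2) :
    ∀ᶠ ε in 𝓝 (0 : ℝ), 2 ^ p * (1 + ε) ^ p < 2 + 2 / (1 + ε) ^ p := by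
  have hcont : ContinuousAt (fun ε : ℝ => (1 + ε) ^ p) 0 :=
    (Real.continuousAt_rpow_const _ _ (by norm_num)).comp (by fun_prop)
  refine (continuousAt_const.mul hcont).eventually_lt
    (continuousAt_const.add (continuousAt_const.div hcont (by simp))) ?_
  have : (2 : ℝ) ^ p < 2 ^ (2 : ℝ) := Real.rpow_lt_rpow_of_exponent_lt one_lt_two hp
  norm_num at this ⊢
  linarith

section Atom

variable {Ω : Type*} [MeasurableSpace Ω] {μ : Measure Ω} {ω : Ω}

theorem Filter.Eventually.apply_of_measure_singleton_ne_zero {P : Ω → Prop}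
    (h : ∀ᵐ x ∂μ, P x) (hω : μ {ω} ≠ 0) : P ω := by
  by_contra hP
  exact hω (measure_mono_null (Set.singleton_subset_iff.2 hP) (ae_iff.1 h))

theorem integral_eq_measureReal_singleton_mul_add_compl (hm : MeasurableSet ({ω} : Set Ω))
    {φ : Ω → ℝ} (hφ : Integrable φ μ) :
    ∫ x, φ x ∂μ = μ.real {ω} * φ ω + ∫ x in {ω}ᶜ, φ x ∂μ := by
  rw [← integral_add_compl hm hφ, setIntegral_congr_fun hm (g := fun _ => φ ω)
    (fun x hx => by rw [Set.mem_singleton_iff.1 hx]), setIntegral_const, smul_eq_mul]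

variable {p : ℝ}

theorem Lp.integrable_abs_rpow (hp : 0 < p) (f : Lp ℝ (ENNReal.ofReal p) μ) :
    Integrable (fun x => |f x| ^ p) μ := by
  simpa [ENNReal.toReal_ofReal hp.le] using
    (Lp.memLp f).integrable_norm_rpow (by simpa using hp) ENNReal.ofReal_ne_top

theorem Lp.norm_rpow_eq_integral_abs_rpow (hp : 0 < p) (f : Lp ℝ (ENNReal.ofReal p) μ) :
    ‖f‖ ^ p = ∫ x, |f x| ^ p ∂μ := by
  have hint : 0 ≤ ∫ x, |f x| ^ p ∂μ := integral_nonneg fun x => by positivity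
  rw [Lp.norm_def, (Lp.memLp f).eLpNorm_eq_integral_rpow_norm (by simpa using hp)
    ENNReal.ofReal_ne_top, ENNReal.toReal_ofReal hp.le, ENNReal.toReal_ofReal (by positivity)]
  simpa using Real.rpow_inv_rpow hint hp.ne'

theorem Lp.norm_rpow_eq_atom_add_compl (hp : 0 < p) (hm : MeasurableSet ({ω} : Set Ω))
    (f : Lp ℝ (ENNReal.ofReal p) μ) :
    ‖f‖ ^ p = μ.real {ω} * |f ω| ^ p + ∫ x in {ω}ᶜ, |f x| ^ p ∂μ := by
  rw [norm_rpow_eq_integral_abs_rpow hp,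
    integral_eq_measureReal_singleton_mul_add_compl hm (integrable_abs_rpow hp f)]

theorem Lp.rpow_add_lt_two_rpow_mul_of_add_ae_eq_indicator {c M L : ℝ} (hp : 1 ≤ p)
    (hc : 0 ≤ c) (hm : MeasurableSet ({ω} : Set Ω)) (hμ : μ {ω} = 1)
    {f g : Lp ℝ (ENNReal.ofReal p) μ}
    (hfg : ⇑(f + g) =ᵐ[μ] ({ω} : Set Ω).indicator fun _ => c)
    (hf : ‖f‖ ^ p < M) (hg : ‖g‖ ^ p < M) (hL : L < ‖f - g‖ ^ p) :
    c ^ p + L < 2 ^ p * M := by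
  have hp0 : 0 < p := by linarith
  have hμω : μ {ω} ≠ 0 := by simp [hμ]
  have hfg' : ∀ᵐ x ∂μ, f x + g x = ({ω} : Set Ω).indicator (fun _ => c) x := by
    filter_upwards [Lp.coeFn_add f g, hfg] with x hadd hx
    rwa [← Pi.add_apply, ← hadd]
  have hat : f ω + g ω = c := by
    simpa using hfg'.apply_of_measure_singleton_ne_zero hμω
  have hoff : ∀ᵐ x ∂μ.restrict {ω}ᶜ, g x = -f x := by
    filter_upwards [ae_restrict_of_ae hfg', ae_restrict_mem hm.compl] with x hx hxω
    rw [Set.indicator_of_notMem hxω] at hx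
    linarith
  have hsub_at : (f - g) ω = f ω - g ω :=
    (Lp.coeFn_sub f g).apply_of_measure_singleton_ne_zero hμω
  have hg_off : ∫ x in {ω}ᶜ, |g x| ^ p ∂μ = ∫ x in {ω}ᶜ, |f x| ^ p ∂μ :=
    integral_congr_ae (hoff.mono fun x hx => by simp only [hx, abs_neg])
  have hsub_off :
      ∫ x in {ω}ᶜ, |(f - g) x| ^ p ∂μ = 2 ^ p * ∫ x in {ω}ᶜ, |f x| ^ p ∂μ := by
    rw [← integral_const_mul]
    refine integral_congr_ae ?_
    filter_upwards [hoff, ae_restrict_of_ae (Lp.coeFn_sub f g)] with x hx hsub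
    rw [hsub, Pi.sub_apply, hx, sub_neg_eq_add, ← two_mul, abs_mul, abs_two,
      Real.mul_rpow zero_le_two (abs_nonneg _)]
  have hμ1 : μ.real {ω} = 1 := by simp [Measure.real, hμ]
  simp only [Lp.norm_rpow_eq_atom_add_compl hp0 hm, hμ1, one_mul, hg_off, hsub_off,
    hsub_at] at hf hg hL
  exact Real.rpow_add_lt_two_rpow_mul_of_add_eq hp hc hat hf hg hL

end Atom

theorem Lp.coeFn_smul_indicatorConstLp_one {Ω : Type*} [MeasurableSpace Ω] {μ : Measure Ω}
    {p : ENNReal} {s : Set Ω} (hs : MeasurableSet s) (hμs : μ s ≠ ⊤) (c : ℝ) :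
    ⇑(c • indicatorConstLp p hs hμs (1 : ℝ)) =ᵐ[μ] s.indicator fun _ => c := by
  filter_upwards [Lp.coeFn_smul c (indicatorConstLp p hs hμs (1 : ℝ)),
    indicatorConstLp_coeFn (p := p) (hs := hs) (hμs := hμs) (c := (1 : ℝ))] with x hsmul hind
  by_cases hx : x ∈ s <;> simp [hsmul, hind, hx]

section EquivLp2

variable {X : Type*} [NormedAddCommGroup X] [NormedSpace ℝ X] {p K : ℝ} {y₁ y₂ : X}

theorem EquivLp2.norm_left_lt (h : EquivLp2 p K y₁ y₂) (hp : p ≠ 0) : ‖y₁‖ < K := by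
  simpa [Real.zero_rpow hp] using (h 1 0 (by simp)).2

theorem EquivLp2.norm_right_lt (h : EquivLp2 p K y₁ y₂) (hp : p ≠ 0) : ‖y₂‖ < K := by
  simpa [Real.zero_rpow hp] using (h 0 1 (by simp)).2

theorem EquivLp2.lt_norm_sub (h : EquivLp2 p K y₁ y₂) :
    K⁻¹ * 2 ^ (1 / p) < ‖y₁ - y₂‖ := by
  simpa [← sub_eq_add_neg, one_add_one_eq_two] using (h 1 (-1) (by simp)).1

end EquivLp2

/-- In `L_p(μ)` with `1 ≤ p < 2` and an atom `ω` of mass `1`, for sufficiently small `ε > 0`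
there is no decomposition `2^{1/p} δ_ω = f + g` with `(f, g)` `(1+ε)`-equivalent to the
canonical basis of `ℓ_p²`. -/
theorem stmt16 {Ω : Type*} [MeasurableSpace Ω] (μ : Measure Ω)
    (p : ℝ) (hp1 : 1 ≤ p) (hp2 : p < 2) [Fact (1 ≤ ENNReal.ofReal p)]
    (ω : Ω) (hm : MeasurableSet ({ω} : Set Ω)) (hμ : μ {ω} = 1) :
    ∃ ε₀ : ℝ, 0 < ε₀ ∧ ∀ ε : ℝ, 0 < ε → ε < ε₀ →
      ¬ ∃ f g : Lp ℝ (ENNReal.ofReal p) μ,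
        EquivLp2 p (1 + ε) f g ∧
        ((2:ℝ) ^ (1/p)) • indicatorConstLp (ENNReal.ofReal p) hm
            (by rw [hμ]; exact ENNReal.one_ne_top) (1:ℝ) = f + g := by
  have hp0 : 0 < p := by linarith
  obtain ⟨ε₀, hε₀, hsmall⟩ :=
    Metric.eventually_nhds_iff.1 (eventually_two_rpow_mul_one_add_rpow_lt hp2)
  refine ⟨ε₀, hε₀, fun ε hε hεε₀ ⟨f, g, hequiv, hsum⟩ => ?_⟩
  set c : ℝ := 2 ^ (1 / p)
  have hcp : c ^ p = 2 := by
    rw [← Real.rpow_mul zero_le_two, one_div_mul_cancel hp0.ne', Real.rpow_one]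
  have hfg : ⇑(f + g) =ᵐ[μ] ({ω} : Set Ω).indicator fun _ => c :=
    hsum ▸ Lp.coeFn_smul_indicatorConstLp_one hm _ c
  have hpow (a b : ℝ) (ha : 0 ≤ a) (hab : a < b) : a ^ p < b ^ p := Real.rpow_lt_rpow ha hab hp0
  have hsub : 2 / (1 + ε) ^ p < ‖f - g‖ ^ p := by
    have := hpow _ _ (by positivity) hequiv.lt_norm_sub
    rwa [Real.mul_rpow (by positivity) (by positivity), hcp, Real.inv_rpow (by positivity),
      inv_mul_eq_div] at this
  have key := Lp.rpow_add_lt_two_rpow_mul_of_add_ae_eq_indicator hp1 (by positivity) hm hμ hfg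
    (hpow _ _ (norm_nonneg f) (hequiv.norm_left_lt hp0.ne'))
    (hpow _ _ (norm_nonneg g) (hequiv.norm_right_lt hp0.ne')) hsub
  have := hsmall (show dist ε 0 < ε₀ by rwa [Real.dist_0_eq_abs, abs_of_pos hε])
  linarith
end

section
/- Let X be a Banach space, x ∈ X with ‖x‖ = 1, p ∈ [1,∞), and ε > 0. Suppose for every δ > 0 there exist x₁', x₂' ∈ X such that (x₁', x₂') is (1+ε/2)-equivalent to the canonical basis of ℓ_p² (after scaling by 2^{1/p}) and ‖2^{1/p}·x − x₁' − x₂'‖ < δ. Then there exist x₁, x₂ ∈ X such that (x₁, x₂) (after scaling by 2^{1/p}) is (1+ε)-equivalent to the canonical basis of ℓ_p² and 2^{1/p}·x = x₁ + x₂. -/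
/-- Approximate decompositions `2^{1/p}·x ≈ x₁' + x₂'` with `(2^{1/p}x₁', 2^{1/p}x₂')`
`(1+ε/2)`-equivalent to the `ℓ_p²` basis can be upgraded to an exact decomposition with
`(1+ε)`-equivalence. -/
theorem stmt17 (X : Type*) [NormedAddCommGroup X] [NormedSpace ℝ X]
    (p : ℝ) (hp : 1 ≤ p) (x : X) (hx : ‖x‖ = 1) (ε : ℝ) (hε : 0 < ε)
    (h : ∀ δ : ℝ, 0 < δ → ∃ x₁' x₂' : X,
      EquivLp2 p (1 + ε / 2) (((2:ℝ) ^ (1/p)) • x₁') (((2:ℝ) ^ (1/p)) • x₂') ∧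
      ‖((2:ℝ) ^ (1/p)) • x - x₁' - x₂'‖ < δ) :
    ∃ x₁ x₂ : X,
      EquivLp2 p (1 + ε) (((2:ℝ) ^ (1/p)) • x₁) (((2:ℝ) ^ (1/p)) • x₂) ∧
      ((2:ℝ) ^ (1/p)) • x = x₁ + x₂ := by
  have hp0 : 0 < p := lt_of_lt_of_le one_pos hp
  set c : ℝ := (2:ℝ) ^ (1/p) with hc_def
  have hc0 : 0 < c := Real.rpow_pos_of_pos two_pos _
  have hc2 : c ≤ 2 := by
    calc c ≤ (2:ℝ) ^ (1:ℝ) := by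
          apply Real.rpow_le_rpow_of_exponent_le one_le_two
          rw [div_le_one hp0]; exact hp
      _ = 2 := Real.rpow_one 2
  set δ : ℝ := ε / (4 * (1 + ε / 2) * (1 + ε)) with hδ_def
  have hεh : (0:ℝ) < 1 + ε / 2 := by linarith
  have hε1 : (0:ℝ) < 1 + ε := by linarith
  have hδ0 : 0 < δ := by positivity
  obtain ⟨x₁', x₂', hE, hd⟩ := h δ hδ0
  set d : X := c • x - x₁' - x₂' with hd_def
  refine ⟨x₁' + (1/2 : ℝ) • d, x₂' + (1/2 : ℝ) • d, ?_, by rw [hd_def]; module⟩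
  intro a b hab
  have habs : (0:ℝ) < |a| ^ p + |b| ^ p := by
    rcases not_and_or.mp hab with ha | hb
    · have : (0:ℝ) < |a| ^ p := Real.rpow_pos_of_pos (abs_pos.mpr ha) _
      have : (0:ℝ) ≤ |b| ^ p := Real.rpow_nonneg (abs_nonneg b) _
      linarith [Real.rpow_pos_of_pos (abs_pos.mpr ha) p]
    · have : (0:ℝ) ≤ |a| ^ p := Real.rpow_nonneg (abs_nonneg a) _
      linarith [Real.rpow_pos_of_pos (abs_pos.mpr hb) p]
  set N : ℝ := (|a| ^ p + |b| ^ p) ^ (1/p) with hN_def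
  have hN0 : 0 < N := Real.rpow_pos_of_pos habs _
  have haN : |a| ≤ N := by
    have h1 : |a| ^ p ≤ |a| ^ p + |b| ^ p := by
      linarith [Real.rpow_nonneg (abs_nonneg b) p]
    calc |a| = (|a| ^ p) ^ (1/p) := by
          rw [← Real.rpow_mul (abs_nonneg a), mul_one_div, div_self hp0.ne', Real.rpow_one]
      _ ≤ N := Real.rpow_le_rpow (Real.rpow_nonneg (abs_nonneg a) _) h1 (by positivity)
  have hbN : |b| ≤ N := by
    have h1 : |b| ^ p ≤ |a| ^ p + |b| ^ p := by
      linarith [Real.rpow_nonneg (abs_nonneg a) p]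
    calc |b| = (|b| ^ p) ^ (1/p) := by
          rw [← Real.rpow_mul (abs_nonneg b), mul_one_div, div_self hp0.ne', Real.rpow_one]
      _ ≤ N := Real.rpow_le_rpow (Real.rpow_nonneg (abs_nonneg b) _) h1 (by positivity)
  obtain ⟨hlo, hhi⟩ := hE a b hab
  have key : a • (c • (x₁' + (1/2 : ℝ) • d)) + b • (c • (x₂' + (1/2 : ℝ) • d))
      = (a • (c • x₁') + b • (c • x₂')) + ((a + b)/2) • (c • d) := by module
  set u : X := a • (c • x₁') + b • (c • x₂')
  set v : X := ((a + b)/2) • (c • d)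
  have hv : ‖v‖ ≤ 2 * δ * N := by
    have : ‖v‖ = |(a+b)/2| * (|c| * ‖d‖) := by
      rw [norm_smul, norm_smul, Real.norm_eq_abs, Real.norm_eq_abs]
    rw [this]
    have h1 : |(a+b)/2| ≤ N := by
      rw [abs_div, abs_two]
      have := abs_add_le a b
      linarith
    have h2 : |c| * ‖d‖ ≤ 2 * δ := by
      rw [abs_of_pos hc0]
      calc c * ‖d‖ ≤ 2 * ‖d‖ := by
            exact mul_le_mul_of_nonneg_right hc2 (norm_nonneg d)
        _ ≤ 2 * δ := by linarith
    calc |(a+b)/2| * (|c| * ‖d‖) ≤ N * (2 * δ) := by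
          apply mul_le_mul h1 h2 (by positivity) hN0.le
      _ = 2 * δ * N := by ring
  have h2δ : 2 * δ = (1 + ε/2)⁻¹ - (1 + ε)⁻¹ := by
    rw [hδ_def]; field_simp; ring
  have h2δ' : 2 * δ ≤ ε / 2 := by
    rw [h2δ]
    have h1 : (1 + ε)⁻¹ ≤ 1 := by rw [inv_le_one_iff₀]; right; linarith
    have h2 : (1 + ε/2)⁻¹ ≤ 1 := by rw [inv_le_one_iff₀]; right; linarith
    have h3 : (0:ℝ) < (1 + ε)⁻¹ := by positivity
    nlinarith [inv_mul_cancel₀ hεh.ne', inv_mul_cancel₀ hε1.ne']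
  rw [key]
  constructor
  · have h1 : ‖u‖ - ‖v‖ ≤ ‖u + v‖ := by
      have h := norm_sub_norm_le u (-v)
      rw [norm_neg, sub_neg_eq_add] at h
      exact h
    have h2 : (1 + ε)⁻¹ * N = (1 + ε/2)⁻¹ * N - 2 * δ * N := by
      rw [h2δ]; ring
    rw [h2]; linarith
  · have h1 : ‖u + v‖ ≤ ‖u‖ + ‖v‖ := norm_add_le u v
    have h2 : 2 * δ * N ≤ (ε/2) * N := by
      apply mul_le_mul_of_nonneg_right h2δ' hN0.le
    nlinarith
end
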